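/- arXiv:2601.06685 — 9 statements merged into one kernel-verified Lean document; each statement's English description precedes it below -/
import Mathlib

section
/- Let H : ℝ → ℝ be a nondecreasing right-continuous function and let μ_H be its associated Lebesgue–Stieltjes measure. Then for all real numbers a ≤ b, the integral over the half-open interval (a, b] of the function t ↦ (H(t) + H(t⁻))/2 with respect to μ_H equals (H(b)² − H(a)²)/2, where H(t⁻) denotes the left limit of H at t. -/
/-! Let `μ` be `μ_H` restricted to `(a, b]`. The square `(a, b]²` is the disjoint union of
`{s ≤ t}` and `{t < s}`, a mirror image of `{s < t}`, so by Tonelli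
`∫ μ [s, ∞) dμ(s) + ∫ μ (s, ∞) dμ(s) = μ(a, b]²`. Since `μ [s, ∞) = H b - H(s⁻)` and
`μ (s, ∞) = H b - H s` for `s ∈ (a, b]`, this reads
`2 H b (H b - H a) - ∫ (H + H(·⁻)) dμ = (H b - H a)²`, which rearranges to the claim. -/

open MeasureTheory Set

section Order

variable {α : Type*} [TopologicalSpace α] [LinearOrder α] [OrderClosedTopology α]
  [SecondCountableTopology α] [MeasurableSpace α] [BorelSpace α]

theorem lintegral_measure_Ici_add_lintegral_measure_Ioi (μ : Measure α) [SFinite μ] :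
    ∫⁻ s, μ (Ici s) ∂μ + ∫⁻ s, μ (Ioi s) ∂μ = μ univ * μ univ := by
  have hle : MeasurableSet {p : α × α | p.1 ≤ p.2} :=
    measurableSet_le measurable_fst measurable_snd
  have hlt : MeasurableSet {p : α × α | p.1 < p.2} :=
    measurableSet_lt measurable_fst measurable_snd
  have hswap : {p : α × α | p.1 ≤ p.2}ᶜ = Prod.swap ⁻¹' {p : α × α | p.1 < p.2} := by
    ext p; simp
  calc ∫⁻ s, μ (Ici s) ∂μ + ∫⁻ s, μ (Ioi s) ∂μ
      = μ.prod μ {p | p.1 ≤ p.2} + μ.prod μ {p | p.1 < p.2} := by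
        rw [Measure.prod_apply hle, Measure.prod_apply hlt]; rfl
    _ = μ.prod μ {p | p.1 ≤ p.2} + μ.prod μ {p | p.1 ≤ p.2}ᶜ := by
        rw [hswap, ← Measure.map_apply measurable_swap hlt, Measure.prod_swap]
    _ = μ univ * μ univ := by
        rw [measure_add_measure_compl hle, ← univ_prod_univ, Measure.prod_prod]

theorem integral_measureReal_Ici_add_integral_measureReal_Ioi (μ : Measure α)
    [IsFiniteMeasure μ] :
    ∫ s, μ.real (Ici s) ∂μ + ∫ s, μ.real (Ioi s) ∂μ = μ.real univ ^ 2 := by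
  have hIci : Antitone fun s => μ (Ici s) := fun _ _ h => measure_mono (Ici_subset_Ici.2 h)
  have hIoi : Antitone fun s => μ (Ioi s) := fun _ _ h => measure_mono (Ioi_subset_Ioi h)
  have hsum := lintegral_measure_Ici_add_lintegral_measure_Ioi μ
  have hfin : ∫⁻ s, μ (Ici s) ∂μ + ∫⁻ s, μ (Ioi s) ∂μ ≠ ⊤ := by
    rw [hsum]; finiteness
  simp only [measureReal_def]
  rw [integral_toReal hIci.measurable.aemeasurable (.of_forall fun _ => measure_lt_top _ _),
    integral_toReal hIoi.measurable.aemeasurable (.of_forall fun _ => measure_lt_top _ _),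
    ← ENNReal.toReal_add (ENNReal.add_ne_top.1 hfin).1 (ENNReal.add_ne_top.1 hfin).2, hsum,
    ENNReal.toReal_mul, sq]

end Order

namespace StieltjesFunction

variable (H : StieltjesFunction ℝ) {a b s : ℝ}

instance isFiniteMeasure_restrict_Ioc : IsFiniteMeasure (H.measure.restrict (Ioc a b)) :=
  isFiniteMeasure_restrict.2 measure_Ioc_lt_top.ne

theorem measureReal_Ioc (h : a ≤ b) : H.measure.real (Ioc a b) = H b - H a := by
  rw [measureReal_def, H.measure_Ioc, ENNReal.toReal_ofReal (sub_nonneg.2 (H.mono h))]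

theorem measureReal_Icc (h : a ≤ b) : H.measure.real (Icc a b) = H b - Function.leftLim H a := by
  rw [measureReal_def, H.measure_Icc, ENNReal.toReal_ofReal (sub_nonneg.2 (H.mono.leftLim_le h))]

theorem measureReal_restrict_Ioc_Ici (hs : s ∈ Ioc a b) :
    (H.measure.restrict (Ioc a b)).real (Ici s) = H b - Function.leftLim H s := by
  have hinter : Ici s ∩ Ioc a b = Icc s b := by
    ext x; grind
  rw [measureReal_restrict_apply measurableSet_Ici, hinter, H.measureReal_Icc hs.2]

theorem measureReal_restrict_Ioc_Ioi (hs : s ∈ Ioc a b) :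
    (H.measure.restrict (Ioc a b)).real (Ioi s) = H b - H s := by
  rw [measureReal_restrict_apply _root_.measurableSet_Ioi, inter_comm, Ioc_inter_Ioi,
    sup_eq_right.2 hs.1.le, H.measureReal_Ioc hs.2]

theorem integrableOn_Ioc : IntegrableOn H (Ioc a b) H.measure :=
  (H.mono.locallyIntegrable.integrableOn_isCompact isCompact_Icc).mono_set Ioc_subset_Icc_self

theorem integrableOn_leftLim_Ioc : IntegrableOn (Function.leftLim H) (Ioc a b) H.measure :=
  (H.mono.leftLim.locallyIntegrable.integrableOn_isCompact isCompact_Icc).mono_set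
    Ioc_subset_Icc_self

end StieltjesFunction

/-- For a nondecreasing right-continuous `H : ℝ → ℝ` (a Stieltjes function) with
associated Lebesgue–Stieltjes measure `μ_H`, and reals `a ≤ b`, the integral over
`(a, b]` of `t ↦ (H t + H t⁻) / 2` with respect to `μ_H` equals `(H b ^ 2 - H a ^ 2) / 2`. -/
theorem midCDF_integral_Ioc (H : StieltjesFunction ℝ) (a b : ℝ) (hab : a ≤ b) :
    ∫ t in Set.Ioc a b, (H t + Function.leftLim H t) / 2 ∂H.measure
      = (H b ^ 2 - H a ^ 2) / 2 := by
  have key := integral_measureReal_Ici_add_integral_measureReal_Ioi (H.measure.restrict (Ioc a b))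
  rw [setIntegral_congr_fun measurableSet_Ioc fun s hs => H.measureReal_restrict_Ioc_Ici hs,
    setIntegral_congr_fun measurableSet_Ioc fun s hs => H.measureReal_restrict_Ioc_Ioi hs,
    integral_sub (integrable_const _) H.integrableOn_leftLim_Ioc,
    integral_sub (integrable_const _) H.integrableOn_Ioc,
    setIntegral_const, measureReal_restrict_apply_univ, H.measureReal_Ioc hab] at key
  rw [integral_div, integral_add H.integrableOn_Ioc H.integrableOn_leftLim_Ioc]
  linear_combination -key / 2
end

section
/- Let F be a CDF with survival function S = 1 − F and mid-CDF F⋆(t) = (F(t) + F(t⁻))/2. Then for every real t, the integral over (t, ∞) of F⋆ with respect to μ_F equals (1 − F(t)²)/2; consequently, whenever S(t) > 0, (1/S(t)) · ∫_{(t,∞)} F⋆ dμ_F = 1 − S(t)/2. -/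
/-!
If `X, Y` are independent with law `μ_F`, then `F x = P(Y ≤ x)` and `F x⁻ = P(Y < x)`, so
`∫_{(t,∞)} (F + F⁻) dμ_F = P(X > t, Y ≤ X) + P(X > t, Y < X)`. On `{X, Y > t}`, swapping `X`
and `Y` turns `Y < X` into `X < Y`, the complement of `Y ≤ X`, so together these contribute
`P(X > t)²`; on `{X > t ≥ Y}` both events hold, contributing `2 P(X > t) P(Y ≤ t)`.
Hence the integral is `S² + 2 S F = 1 - F²`.
-/

open MeasureTheory Set Filter Function

section LinearOrder

variable {α : Type*} [LinearOrder α] [TopologicalSpace α] [OrderClosedTopology α]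
  [SecondCountableTopology α] [MeasurableSpace α] [OpensMeasurableSpace α]
  (μ : Measure α) [SFinite μ]

theorem lintegral_measure_Iic_add_measure_Iio :
    ∫⁻ x, (μ (Iic x) + μ (Iio x)) ∂μ = μ univ * μ univ := by
  have hle : MeasurableSet {p : α × α | p.2 ≤ p.1} :=
    measurableSet_le measurable_snd measurable_fst
  have hlt : MeasurableSet {p : α × α | p.1 < p.2} :=
    measurableSet_lt measurable_fst measurable_snd
  have hswap : ∫⁻ x, μ (Iio x) ∂μ = μ.prod μ {p | p.1 < p.2} := by
    rw [← Measure.prod_swap, Measure.map_apply measurable_swap hlt,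
      Measure.prod_apply (measurable_swap hlt)]
    rfl
  have hIic : ∫⁻ x, μ (Iic x) ∂μ = μ.prod μ {p | p.2 ≤ p.1} := (Measure.prod_apply hle).symm
  have hIic_meas : Measurable fun x => μ (Iic x) := measurable_measure_prodMk_left hle
  rw [lintegral_add_left hIic_meas, hIic, hswap, ← measure_union _ hlt, ← Measure.prod_prod,
    univ_prod_univ]
  · congr 1
    ext p
    simp [le_or_gt]
  · exact disjoint_left.2 fun p h₁ h₂ => not_lt.2 h₁ h₂

theorem setLIntegral_Ioi_measure_Iic_add_measure_Iio (t : α) :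
    ∫⁻ x in Ioi t, (μ (Iic x) + μ (Iio x)) ∂μ = μ (Ioi t) * (μ (Ioi t) + 2 * μ (Iic t)) := by
  set ν := μ.restrict (Ioi t)
  have hsplit : ∀ x ∈ Ioi t,
      μ (Iic x) + μ (Iio x) = 2 * μ (Iic t) + (ν (Iic x) + ν (Iio x)) := by
    intro x hx
    rw [Measure.restrict_apply measurableSet_Iic, Measure.restrict_apply measurableSet_Iio,
      inter_comm, Ioi_inter_Iic, inter_comm, Ioi_inter_Iio,
      ← Iic_union_Ioc_eq_Iic (le_of_lt hx), ← Iic_union_Ioo_eq_Iio hx,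
      measure_union (Iic_disjoint_Ioc le_rfl) measurableSet_Ioc,
      measure_union ((Iic_disjoint_Ioc le_rfl).mono_right Ioo_subset_Ioc_self) measurableSet_Ioo]
    ring
  rw [setLIntegral_congr_fun measurableSet_Ioi hsplit, lintegral_add_left measurable_const,
    setLIntegral_const, lintegral_measure_Iic_add_measure_Iio, Measure.restrict_apply_univ]
  ring

end LinearOrder

namespace StieltjesFunction

variable (F : StieltjesFunction ℝ) (h0 : Tendsto F atBot (nhds 0))
include h0

theorem nonneg (x : ℝ) : 0 ≤ F x := F.mono.le_of_tendsto h0 x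

theorem leftLim_nonneg (x : ℝ) : 0 ≤ leftLim F x :=
  (F.nonneg h0 (x - 1)).trans (F.mono.le_leftLim (sub_one_lt x))

theorem measure_Iic_add_measure_Iio (x : ℝ) :
    F.measure (Iic x) + F.measure (Iio x) = ENNReal.ofReal (F x + leftLim F x) := by
  rw [F.measure_Iic h0, F.measure_Iio h0, sub_zero, sub_zero,
    ENNReal.ofReal_add (F.nonneg h0 x) (F.leftLim_nonneg h0 x)]

theorem setIntegral_Ioi_add_leftLim (h1 : Tendsto F atTop (nhds 1)) (t : ℝ) :
    ∫ s in Ioi t, (F s + leftLim F s) ∂F.measure = 1 - F t ^ 2 := by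
  have hF_le_one : F t ≤ 1 := F.mono.ge_of_tendsto h1 t
  have hF_nonneg := F.nonneg h0 t
  rw [integral_eq_lintegral_of_nonneg_ae
    (ae_of_all _ fun x => add_nonneg (F.nonneg h0 x) (F.leftLim_nonneg h0 x))
    (F.mono.measurable.add F.mono.leftLim.measurable).aestronglyMeasurable]
  simp_rw [← F.measure_Iic_add_measure_Iio h0]
  rw [setLIntegral_Ioi_measure_Iic_add_measure_Iio, F.measure_Ioi h1, F.measure_Iic h0, sub_zero,
    ← ENNReal.ofReal_ofNat 2, ← ENNReal.ofReal_mul zero_le_two,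
    ← ENNReal.ofReal_add (sub_nonneg.2 hF_le_one) (by positivity),
    ← ENNReal.ofReal_mul (sub_nonneg.2 hF_le_one), ENNReal.toReal_ofReal (by nlinarith)]
  ring

end StieltjesFunction

/-- For a CDF `F` (nondecreasing right-continuous with limits 0 at −∞ and 1 at +∞), with
survival function `S = 1 - F` and mid-CDF `F⋆ t = (F t + F t⁻)/2`, the integral of `F⋆`
over `(t, ∞)` w.r.t. `μ_F` equals `(1 - F t ^ 2)/2`; consequently, when `S t > 0`,
`(1 / S t) * ∫_{(t,∞)} F⋆ dμ_F = 1 - S t / 2`. -/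
theorem midCDF_integral_Ioi (F : StieltjesFunction ℝ)
    (h0 : Filter.Tendsto F Filter.atBot (nhds 0))
    (h1 : Filter.Tendsto F Filter.atTop (nhds 1)) (t : ℝ) :
    (∫ s in Set.Ioi t, (F s + Function.leftLim F s) / 2 ∂F.measure
        = (1 - F t ^ 2) / 2) ∧
    (0 < 1 - F t →
      (1 / (1 - F t)) * ∫ s in Set.Ioi t, (F s + Function.leftLim F s) / 2 ∂F.measure
        = 1 - (1 - F t) / 2) := by
  have hintegral : ∫ s in Set.Ioi t, (F s + Function.leftLim F s) / 2 ∂F.measure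
      = (1 - F t ^ 2) / 2 := by
    rw [integral_div, F.setIntegral_Ioi_add_leftLim h0 h1]
  refine ⟨hintegral, fun hS => ?_⟩
  rw [hintegral]
  field_simp
  ring
end

section
/- Let X and C be independent real-valued random variables on a probability space, and suppose the CDF F of X, defined by F(x) = P(X ≤ x), is continuous. Set T = min(X, C) and let Δ be the indicator of the event {X ≤ C}. Then E[ Δ·F(T) + (1 − Δ)·(1 − (1 − F(T))/2) ] = 1/2. -/
/-!
By independence the law of `(X, C)` is `μ ⊗ ν` with `μ`, `ν` the laws of `X`, `C`, so one may
integrate out `X` with `C = c` fixed. Below `c` the rank is `F X`, and since `μ` has no atoms the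
square `(-∞, c]²` splits along its null diagonal into two mirror-image halves, whence
`∫_{x ≤ c} F dμ = F(c)² / 2`. Above `c`, which has probability `1 - F c`, the rank is the constant
`(1 + F c) / 2`. The conditional mean is `F(c)² / 2 + (1 - F(c)²) / 2 = 1 / 2` for every `c`.
-/

open MeasureTheory ProbabilityTheory Set

lemma ProbabilityTheory.nullSingletonClass_of_continuous_cdf {μ : Measure ℝ}
    [IsProbabilityMeasure μ] (h : Continuous (cdf μ)) : NullSingletonClass μ where
  measure_singleton a := by
    rw [← measure_cdf μ, StieltjesFunction.measure_singleton,
      leftLim_eq_of_tendsto ((h.tendsto a).mono_left nhdsWithin_le_nhds), sub_self,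
      ENNReal.ofReal_zero]

lemma MeasureTheory.Measure.prod_diagonal_eq_zero {α : Type*} [MeasurableSpace α]
    [MeasurableEq α] (μ ν : Measure α) [SFinite ν] [NullSingletonClass ν] :
    μ.prod ν (diagonal α) = 0 := by
  have hsection : ∀ x : α, Prod.mk x ⁻¹' diagonal α = {x} := fun x => by
    ext y; simp [eq_comm]
  simp [Measure.prod_apply measurableSet_diagonal, hsection]

lemma MeasureTheory.Measure.two_mul_lintegral_Iic_measure_Iic (μ : Measure ℝ) [SFinite μ]
    [NullSingletonClass μ] (c : ℝ) : 2 * ∫⁻ x in Iic c, μ (Iic x) ∂μ = μ (Iic c) ^ 2 := by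
  set A : Set (ℝ × ℝ) := {p | p.2 ≤ p.1 ∧ p.1 ≤ c}
  have hA : MeasurableSet A :=
    (measurableSet_le measurable_snd measurable_fst).inter (measurable_fst measurableSet_Iic)
  have hA_swap : MeasurableSet (Prod.swap ⁻¹' A) := measurable_swap hA
  have hA_measure : μ.prod μ A = ∫⁻ x in Iic c, μ (Iic x) ∂μ := by
    rw [Measure.prod_apply hA, ← lintegral_indicator measurableSet_Iic]
    congr 1 with x
    by_cases hx : x ≤ c <;> simp [A, hx, Iic_def]
  have hA_swap_measure : μ.prod μ (Prod.swap ⁻¹' A) = μ.prod μ A :=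
    (Measure.measurePreserving_swap (μ := μ) (ν := μ)).measure_preimage hA.nullMeasurableSet
  have hunion : A ∪ Prod.swap ⁻¹' A = Iic c ×ˢ Iic c := by
    ext ⟨x, y⟩
    simp only [A, mem_union, mem_preimage, Prod.swap_prod_mk, mem_ofPred_eq, mem_prod, mem_Iic]
    constructor
    · rintro (⟨hyx, hx⟩ | ⟨hxy, hy⟩) <;> constructor <;> linarith
    · rintro ⟨hx, hy⟩
      rcases le_total y x with hyx | hxy
      exacts [Or.inl ⟨hyx, hx⟩, Or.inr ⟨hxy, hy⟩]
  have hinter : μ.prod μ (A ∩ Prod.swap ⁻¹' A) = 0 :=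
    measure_mono_null (fun p ⟨⟨h₁, _⟩, h₂, _⟩ => le_antisymm h₂ h₁)
      (Measure.prod_diagonal_eq_zero μ μ)
  have := measure_union_add_inter (μ := μ.prod μ) A hA_swap
  rw [hunion, hinter, add_zero, Measure.prod_prod, hA_swap_measure, hA_measure] at this
  rw [sq, this, two_mul]

lemma ProbabilityTheory.setIntegral_Iic_cdf (μ : Measure ℝ) [IsProbabilityMeasure μ]
    [NullSingletonClass μ] (c : ℝ) : ∫ x in Iic c, cdf μ x ∂μ = cdf μ c ^ 2 / 2 := by
  have hcdf : ∀ x, cdf μ x = (μ (Iic x)).toReal := fun x => by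
    rw [cdf_eq_real, measureReal_def]
  have := congrArg ENNReal.toReal (Measure.two_mul_lintegral_Iic_measure_Iic μ c)
  simp only [ENNReal.toReal_mul, ENNReal.toReal_pow, ENNReal.toReal_ofNat] at this
  simp_rw [hcdf]
  have hmono : Monotone fun x => μ (Iic x) := fun _ _ h => measure_mono (Iic_subset_Iic.2 h)
  rw [integral_toReal hmono.measurable.aemeasurable (ae_of_all _ fun x => measure_lt_top μ _)]
  linarith

noncomputable def imputedRank (F : ℝ → ℝ) (p : ℝ × ℝ) : ℝ :=
  if p.1 ≤ p.2 then F p.1 else (1 + F p.2) / 2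

lemma imputedRank_eq (F : ℝ → ℝ) (x c : ℝ) :
    (if x ≤ c then (1 : ℝ) else 0) * F (min x c) + (1 - if x ≤ c then (1 : ℝ) else 0)
      * (1 - (1 - F (min x c)) / 2) = imputedRank F (x, c) := by
  by_cases h : x ≤ c
  · simp [imputedRank, h]
  · simp only [imputedRank, h, if_false, min_eq_right (not_le.mp h).le]
    ring

lemma measurable_imputedRank_cdf (μ : Measure ℝ) : Measurable (imputedRank (cdf μ)) :=
  Measurable.ite (measurableSet_le measurable_fst measurable_snd)
    ((cdf μ).mono.measurable.comp measurable_fst)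
    (((cdf μ).mono.measurable.comp measurable_snd).const_add 1 |>.div_const 2)

lemma abs_imputedRank_cdf_le_one (μ : Measure ℝ) (p : ℝ × ℝ) : |imputedRank (cdf μ) p| ≤ 1 := by
  have := cdf_nonneg μ p.1; have := cdf_le_one μ p.1
  have := cdf_nonneg μ p.2; have := cdf_le_one μ p.2
  unfold imputedRank
  split_ifs <;> rw [abs_le] <;> constructor <;> linarith

lemma integrable_imputedRank_cdf (μ : Measure ℝ) (ν : Measure (ℝ × ℝ)) [IsFiniteMeasure ν] :
    Integrable (imputedRank (cdf μ)) ν :=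
  .of_bound (measurable_imputedRank_cdf μ).aestronglyMeasurable 1
    (ae_of_all _ (abs_imputedRank_cdf_le_one μ))

lemma integral_imputedRank_cdf_left (μ : Measure ℝ) [IsProbabilityMeasure μ]
    [NullSingletonClass μ] (c : ℝ) :
    ∫ x, imputedRank (cdf μ) (x, c) ∂μ = 1 / 2 := by
  have hint : Integrable (fun x => imputedRank (cdf μ) (x, c)) μ :=
    .of_bound ((measurable_imputedRank_cdf μ).comp measurable_prodMk_right).aestronglyMeasurable 1
      (ae_of_all _ fun x => abs_imputedRank_cdf_le_one μ (x, c))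
  have hbelow : ∫ x in Iic c, imputedRank (cdf μ) (x, c) ∂μ = cdf μ c ^ 2 / 2 := by
    rw [← setIntegral_Iic_cdf μ c]
    exact setIntegral_congr_fun measurableSet_Iic fun x hx => if_pos hx
  have habove : ∫ x in (Iic c)ᶜ, imputedRank (cdf μ) (x, c) ∂μ
      = (1 - cdf μ c) * ((1 + cdf μ c) / 2) := by
    rw [setIntegral_congr_fun (f := fun x => imputedRank (cdf μ) (x, c))
      (g := fun _ => (1 + cdf μ c) / 2) measurableSet_Iic.compl fun x hx => if_neg hx,
      setIntegral_const, probReal_compl_eq_one_sub measurableSet_Iic, cdf_eq_real, smul_eq_mul]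
  rw [← integral_add_compl measurableSet_Iic hint, hbelow, habove]
  ring

/-- Mean statement of Theorem 1: for independent real random variables `X`, `C` on a
probability space, with `F x = P{X ≤ x}` continuous, `T = min X C` and `Δ = 1{X ≤ C}`,
the censored-data imputed rank `ℛ = Δ·F(T) + (1 − Δ)·(1 − (1 − F(T))/2)` has mean `1/2`. -/
theorem imputedRank_mean {Ω : Type*} [MeasurableSpace Ω] (P : Measure Ω)
    [IsProbabilityMeasure P]
    (X C : Ω → ℝ) (hX : Measurable X) (hC : Measurable C)
    (hXC : ProbabilityTheory.IndepFun X C P)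
    (F : ℝ → ℝ) (hF : ∀ x, F x = (P {ω | X ω ≤ x}).toReal)
    (hFc : Continuous F) :
    ∫ ω, ((if X ω ≤ C ω then (1 : ℝ) else 0) * F (min (X ω) (C ω))
        + (1 - if X ω ≤ C ω then (1 : ℝ) else 0)
          * (1 - (1 - F (min (X ω) (C ω))) / 2)) ∂P = 1 / 2 := by
  have : IsProbabilityMeasure (P.map X) := Measure.isProbabilityMeasure_map hX.aemeasurable
  have : IsProbabilityMeasure (P.map C) := Measure.isProbabilityMeasure_map hC.aemeasurable
  obtain rfl : F = cdf (P.map X) := funext fun x => by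
    rw [hF, cdf_eq_real, map_measureReal_apply hX measurableSet_Iic, measureReal_def]; rfl
  have : NullSingletonClass (P.map X) := nullSingletonClass_of_continuous_cdf hFc
  have hlaw : P.map (fun ω => (X ω, C ω)) = (P.map X).prod (P.map C) :=
    (indepFun_iff_map_prod_eq_prod_map_map hX.aemeasurable hC.aemeasurable).mp hXC
  simp_rw [imputedRank_eq]
  rw [← integral_map (hX.prodMk hC).aemeasurable
      (measurable_imputedRank_cdf _).aestronglyMeasurable, hlaw,
    integral_prod_symm _ (integrable_imputedRank_cdf _ _)]
  simp [integral_imputedRank_cdf_left]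
end

section
/- Let X and C be independent real-valued random variables on a probability space, suppose the CDF F of X, defined by F(x) = P(X ≤ x), is continuous and satisfies F(t) < 1 for every real t, and let a : [0,1] → ℝ be continuous with A(u) = ∫_0^u a(s) ds. Set T = min(X, C) and let Δ be the indicator of {X ≤ C}. Then E[ Δ·a(F(T)) + (1 − Δ)·(A(1) − A(F(T)))/(1 − F(T)) ] = A(1) − A(0). -/
/-!
Condition on `C = c`. Since `F` is continuous, `F(X)` is uniform on `[0,1]` and `{X ≤ c}` agrees
with `{F(X) ≤ F(c)}` almost surely, so `E[a(F X); X ≤ c] = A(F c)`. On `{X > c}`, which has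
probability `1 - F c`, the imputed value is `(A(1) - A(F c)) / (1 - F c)`, so the conditional mean
is `A(1)` whatever `c` is. Independence of `X` and `C` lets us integrate over `c` by Fubini.
-/

open MeasureTheory Set

lemma intervalIntegral.norm_integral_div_sub_le {a : ℝ → ℝ} {M u v : ℝ} (huv : u < v)
    (hM : ∀ x ∈ Icc u v, ‖a x‖ ≤ M) : ‖(∫ s in u..v, a s) / (v - u)‖ ≤ M := by
  rw [norm_div, Real.norm_of_nonneg (sub_pos.mpr huv).le, div_le_iff₀ (sub_pos.mpr huv)]
  calc ‖∫ s in u..v, a s‖ ≤ M * |v - u| :=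
        norm_integral_le_of_norm_le_const fun x hx =>
          hM x (Ioc_subset_Icc_self (uIoc_of_le huv.le ▸ hx))
    _ = M * (v - u) := by rw [abs_of_pos (sub_pos.mpr huv)]

namespace ProbabilityTheory

lemma IndepFun.integral_comp_eq_integral_integral {Ω α β E : Type*} [MeasurableSpace Ω]
    [MeasurableSpace α] [MeasurableSpace β] [NormedAddCommGroup E] [NormedSpace ℝ E]
    {P : Measure Ω} [IsFiniteMeasure P] {X : Ω → α} {Y : Ω → β} (hX : AEMeasurable X P)
    (hY : AEMeasurable Y P) (hXY : IndepFun X Y P) {g : α × β → E}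
    (hg : Integrable g ((P.map X).prod (P.map Y))) :
    ∫ ω, g (X ω, Y ω) ∂P = ∫ y, ∫ x, g (x, y) ∂(P.map X) ∂(P.map Y) := by
  have hmap := hXY.map_prod_eq_prod_map_map hX hY
  rw [← integral_prod_symm g hg, ← hmap,
    integral_map (hX.prodMk hY) (hmap ▸ hg.aestronglyMeasurable)]

section ContinuousCDF

variable {μ : Measure ℝ} [IsProbabilityMeasure μ]

/-- The sublevel set `{F ≤ u}` is a closed lower set, hence an `Iic s`, and `F s = u` by the
intermediate value theorem. -/
lemma measure_cdf_preimage_Iic (hμ : Continuous (cdf μ)) (u : ℝ) :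
    μ (cdf μ ⁻¹' Iic u) = ENNReal.ofReal (min 1 u) := by
  rcases le_or_gt 1 u with hu | hu
  · rw [min_eq_left hu, ENNReal.ofReal_one, ← measure_univ (μ := μ)]
    exact congrArg μ (eq_univ_of_forall fun x => (cdf_le_one μ x).trans hu)
  rw [min_eq_right hu.le]
  set S := cdf μ ⁻¹' Iic u
  rcases S.eq_empty_or_nonempty with hS | ⟨c, hc⟩
  · suffices u ≤ 0 by rw [hS, measure_empty, ENNReal.ofReal_of_nonpos this]
    by_contra! hu0
    obtain ⟨x, hx⟩ := ((tendsto_cdf_atBot μ).eventually_lt_const hu0).exists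
    exact hS.subset (le_of_lt hx : cdf μ x ≤ u)
  obtain ⟨b, hb⟩ := ((tendsto_cdf_atTop μ).eventually_const_lt hu).exists
  obtain ⟨x, hx⟩ := mem_range_of_exists_le_of_exists_ge hμ ⟨c, hc⟩ ⟨b, hb.le⟩
  have hbdd : BddAbove S := ⟨b, fun y hy => by
    by_contra! hby
    exact (hb.trans_le (monotone_cdf μ hby.le)).not_ge hy⟩
  have hsup : sSup S ∈ S := (isClosed_le hμ continuous_const).csSup_mem ⟨c, hc⟩ hbdd
  have hS : S = Iic (sSup S) :=
    Subset.antisymm (fun y hy => le_csSup hbdd hy) fun y hy => (monotone_cdf μ hy).trans hsup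
  have hF_sup : cdf μ (sSup S) = u :=
    le_antisymm hsup (hx ▸ monotone_cdf μ (le_csSup hbdd (hx.le : cdf μ x ≤ u)))
  rw [hS, ← ofReal_cdf, hF_sup]

theorem map_cdf_eq_restrict_Icc (hμ : Continuous (cdf μ)) :
    μ.map (cdf μ) = volume.restrict (Icc 0 1) := by
  have : IsProbabilityMeasure (μ.map (cdf μ)) :=
    Measure.isProbabilityMeasure_map hμ.aemeasurable
  refine Measure.ext_of_Iic _ _ fun u => ?_
  rw [Measure.map_apply hμ.measurable measurableSet_Iic, Measure.restrict_apply measurableSet_Iic,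
    measure_cdf_preimage_Iic hμ, inter_comm, ← Ici_inter_Iic, inter_assoc, Iic_inter_Iic,
    Ici_inter_Iic, Real.volume_Icc, sub_zero]

lemma Iic_ae_eq_cdf_preimage (hμ : Continuous (cdf μ)) (c : ℝ) :
    Iic c =ᵐ[μ] cdf μ ⁻¹' Iic (cdf μ c) :=
  ae_eq_of_subset_of_measure_ge (fun _ hx => monotone_cdf μ hx)
    (by rw [measure_cdf_preimage_Iic hμ, min_eq_right (cdf_le_one μ c), ofReal_cdf])
    measurableSet_Iic.nullMeasurableSet (measure_ne_top μ _)

lemma setIntegral_Iic_comp_cdf (hμ : Continuous (cdf μ)) {g : ℝ → ℝ}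
    (hg : AEStronglyMeasurable g (volume.restrict (Icc 0 1))) (c : ℝ) :
    ∫ x in Iic c, g (cdf μ x) ∂μ = ∫ u in 0..cdf μ c, g u := by
  rw [setIntegral_congr_set (Iic_ae_eq_cdf_preimage hμ c),
    ← setIntegral_map measurableSet_Iic (map_cdf_eq_restrict_Icc hμ ▸ hg) hμ.aemeasurable,
    map_cdf_eq_restrict_Icc hμ, Measure.restrict_restrict measurableSet_Iic, inter_comm,
    ← Ici_inter_Iic, inter_assoc, Iic_inter_Iic, min_eq_right (cdf_le_one μ c), Ici_inter_Iic,
    integral_Icc_eq_integral_Ioc, intervalIntegral.integral_of_le (cdf_nonneg μ c)]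

end ContinuousCDF

/-- The score of an observation `x` censored at `c`: `a (F x)` if `x` is observed, and otherwise
the conditional mean of `a (F X)` given `X > c`, namely `∫_{F c}^1 a / (1 - F c)`. -/
noncomputable def imputedScore (F a : ℝ → ℝ) (x c : ℝ) : ℝ :=
  if x ≤ c then a (F x) else (∫ s in F c..1, a s) / (1 - F c)

lemma integrable_imputedScore {ν : Measure (ℝ × ℝ)} [IsFiniteMeasure ν] {F a : ℝ → ℝ}
    (hF : Continuous F) (hF_mem : ∀ x, F x ∈ Ico 0 1) (ha : ContinuousOn a (Icc 0 1)) :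
    Integrable (fun p => imputedScore F a p.1 p.2) ν := by
  have hF_Icc (x : ℝ) : F x ∈ Icc 0 1 := Ico_subset_Icc_self (hF_mem x)
  have hmean : ContinuousOn (fun v => ∫ s in v..1, a s) (Icc 0 1) := by
    rw [← uIcc_of_le zero_le_one]
    exact intervalIntegral.continuousOn_primitive_interval_left
      (by rw [uIcc_of_le zero_le_one]; exact ha.integrableOn_Icc)
  have hmeas : Measurable fun p : ℝ × ℝ => imputedScore F a p.1 p.2 :=
    Measurable.ite (measurableSet_le measurable_fst measurable_snd)
      ((ha.comp_continuous hF hF_Icc).measurable.comp measurable_fst)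
      (((hmean.comp_continuous hF hF_Icc).div (continuous_const.sub hF)
        fun t => (sub_pos.mpr (hF_mem t).2).ne').measurable.comp measurable_snd)
  obtain ⟨M, hM⟩ := isCompact_Icc.exists_bound_of_continuousOn ha
  refine .of_bound hmeas.aestronglyMeasurable M (ae_of_all _ fun p => ?_)
  by_cases h : p.1 ≤ p.2
  · simpa [imputedScore, h] using hM _ (hF_Icc p.1)
  · simpa [imputedScore, h] using intervalIntegral.norm_integral_div_sub_le (hF_mem p.2).2
      fun x hx => hM x ⟨(hF_mem p.2).1.trans hx.1, hx.2⟩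

lemma integral_imputedScore_cdf {μ : Measure ℝ} [IsProbabilityMeasure μ]
    (hμ : Continuous (cdf μ)) {a : ℝ → ℝ} (ha : IntegrableOn a (Icc 0 1)) {c : ℝ}
    (hc : cdf μ c < 1) :
    ∫ x, imputedScore (cdf μ) a x c ∂μ = ∫ s in 0..1, a s := by
  have hint : IntervalIntegrable a volume 0 1 :=
    (intervalIntegrable_iff_integrableOn_Icc_of_le zero_le_one).mpr ha
  have ha_cdf : Integrable (fun x => a (cdf μ x)) μ := by
    rw [← Function.comp_def, ← integrable_map_measure _ hμ.aemeasurable,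
      map_cdf_eq_restrict_Icc hμ]
    · exact ha
    · rw [map_cdf_eq_restrict_Icc hμ]; exact ha.aestronglyMeasurable
  have hIoi : μ.real (Ioi c) = 1 - cdf μ c := by
    rw [← compl_Iic, probReal_compl_eq_one_sub measurableSet_Iic, cdf_eq_real]
  have hmem : cdf μ c ∈ uIcc (0 : ℝ) 1 := by
    rw [uIcc_of_le zero_le_one]; exact ⟨cdf_nonneg μ c, cdf_le_one μ c⟩
  change ∫ x, (Iic c).piecewise (fun x => a (cdf μ x))
    (fun _ => (∫ s in cdf μ c..1, a s) / (1 - cdf μ c)) x ∂μ = _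
  rw [integral_piecewise measurableSet_Iic ha_cdf.integrableOn
      (integrableOn_const (measure_ne_top μ _)), compl_Iic,
    setIntegral_Iic_comp_cdf hμ ha.aestronglyMeasurable, setIntegral_const, hIoi, smul_eq_mul,
    mul_div_cancel₀ _ (sub_ne_zero.mpr hc.ne'),
    intervalIntegral.integral_add_adjacent_intervals (hint.mono_set (uIcc_subset_uIcc_left hmem))
      (hint.mono_set (uIcc_subset_uIcc_right hmem))]

end ProbabilityTheory

open ProbabilityTheory in
/-- Mean statement of Theorem 5: for independent real random variables `X`, `C` on a
probability space, with `F x = P{X ≤ x}` continuous and `F t < 1` for all `t`, for a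
continuous score `a : [0,1] → ℝ` with `A u = ∫_0^u a`, `T = min X C`, `Δ = 1{X ≤ C}`,
the general-score imputed rank satisfies
`E[Δ·a(F(T)) + (1 − Δ)·(A(1) − A(F(T)))/(1 − F(T))] = A(1) − A(0)`. -/
theorem generalScore_imputedRank_mean {Ω : Type*} [MeasurableSpace Ω] (P : Measure Ω)
    [IsProbabilityMeasure P]
    (X C : Ω → ℝ) (hX : Measurable X) (hC : Measurable C)
    (hXC : ProbabilityTheory.IndepFun X C P)
    (F : ℝ → ℝ) (hF : ∀ x, F x = (P {ω | X ω ≤ x}).toReal)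
    (hFc : Continuous F) (hFlt : ∀ t : ℝ, F t < 1)
    (a : ℝ → ℝ) (ha : ContinuousOn a (Set.Icc 0 1))
    (A : ℝ → ℝ) (hA : ∀ u, A u = ∫ s in (0 : ℝ)..u, a s) :
    ∫ ω, ((if X ω ≤ C ω then (1 : ℝ) else 0) * a (F (min (X ω) (C ω)))
        + (1 - if X ω ≤ C ω then (1 : ℝ) else 0)
          * ((A 1 - A (F (min (X ω) (C ω)))) / (1 - F (min (X ω) (C ω))))) ∂P
      = A 1 - A 0 := by
  set μ := P.map X
  have : IsProbabilityMeasure μ := Measure.isProbabilityMeasure_map hX.aemeasurable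
  have : IsProbabilityMeasure (P.map C) := Measure.isProbabilityMeasure_map hC.aemeasurable
  obtain rfl : F = cdf μ := funext fun x => by
    rw [hF, cdf_eq_real, map_measureReal_apply hX measurableSet_Iic]; rfl
  have hF_mem (x : ℝ) : cdf μ x ∈ Ico 0 1 := ⟨cdf_nonneg μ x, hFlt x⟩
  have hint : IntervalIntegrable a volume 0 1 := ha.intervalIntegrable_of_Icc zero_le_one
  have hA_sub (v : ℝ) (hv : v ∈ Ico 0 1) : A 1 - A v = ∫ s in v..1, a s := by
    rw [hA, hA, intervalIntegral.integral_interval_sub_left hint (hint.mono_set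
      (uIcc_subset_uIcc_left (by rw [uIcc_of_le zero_le_one]; exact Ico_subset_Icc_self hv)))]
  calc _ = ∫ ω, imputedScore (cdf μ) a (X ω) (C ω) ∂P :=
        integral_congr_ae <| ae_of_all _ fun ω => by
          by_cases h : X ω ≤ C ω
          · simp [imputedScore, h]
          · simp [imputedScore, h, (not_le.mp h).le, hA_sub _ (hF_mem (C ω))]
    _ = ∫ c, ∫ x, imputedScore (cdf μ) a x c ∂μ ∂(P.map C) :=
        hXC.integral_comp_eq_integral_integral hX.aemeasurable hC.aemeasurable
          (integrable_imputedScore hFc hF_mem ha)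
    _ = ∫ _, A 1 ∂(P.map C) := integral_congr_ae <| ae_of_all _ fun c =>
        (integral_imputedScore_cdf hFc ha.integrableOn_Icc (hFlt c)).trans (hA 1).symm
    _ = A 1 - A 0 := by simp [hA 0]
end

section
/- In the self-consistent (Kaplan–Meier) estimator setup with data e_1, …, e_n and indicators δ_1, …, δ_n ∈ {0,1} satisfying δ_i = 1 whenever e_i = max_j e_j, the sum of the Wilcoxon imputed mid-ranks is n/2; that is, ∑_{i=1}^n [ δ_i·(F̂(e_i) + F̂(e_i⁻))/2 + (1 − δ_i)·(1 − (1 − F̂(e_i))/2) ] = n/2. -/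
open Finset
open scoped Classical

/-- Number at risk at `v`: `Y(v) = #{j : e_j ≥ v}` (as a real number). -/
noncomputable def kmY {n : ℕ} (e : Fin n → ℝ) (v : ℝ) : ℝ :=
  ((Finset.univ.filter fun j => v ≤ e j).card : ℝ)

/-- Number of (uncensored) events at `v`: `d(v) = #{i : e_i = v ∧ δ_i = 1}`. -/
noncomputable def kmD {n : ℕ} (e : Fin n → ℝ) (δ : Fin n → ℝ) (v : ℝ) : ℝ :=
  ((Finset.univ.filter fun i => e i = v ∧ δ i = 1).card : ℝ)

/-- Self-consistent (Kaplan–Meier) estimator: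
`F̂(t) = 1 − ∏_{v ∈ V, v ≤ t} (1 − d(v)/Y(v))`, `V` the set of distinct data values. -/
noncomputable def kmF {n : ℕ} (e : Fin n → ℝ) (δ : Fin n → ℝ) (t : ℝ) : ℝ :=
  1 - ∏ v ∈ (Finset.univ.image e).filter (fun v => v ≤ t), (1 - kmD e δ v / kmY e v)

/-- Left limit of the self-consistent estimator:
`F̂(t⁻) = 1 − ∏_{v ∈ V, v < t} (1 − d(v)/Y(v))`. -/
noncomputable def kmFminus {n : ℕ} (e : Fin n → ℝ) (δ : Fin n → ℝ) (t : ℝ) : ℝ :=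
  1 - ∏ v ∈ (Finset.univ.image e).filter (fun v => v < t), (1 - kmD e δ v / kmY e v)

/-
Writing `S = 1 - F̂` and `m(v) = #{i : e_i = v}`, the `i`-th mid-rank is
`1 - (S(e_i) + δ_i S(e_i⁻)) / 2`, so it suffices that `∑_v (m(v) S(v) + d(v) S(v⁻)) = n`.
Since `Y(v) S(v) = (Y(v) - d(v)) S(v⁻)`, the `v`-th term equals
`Y(v) S(v⁻) - (Y(v) - m(v)) S(v)`, and `Y(v) - m(v)` is the number at risk at the
next value: the sum telescopes to `Y(min V) = n`.
-/

theorem sum_mul_prod_le_add_mul_prod_lt_eq_sum {α K : Type*} [LinearOrder α] [Field K]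
    (V : Finset α) (m d Y : α → K)
    (hY : ∀ v ∈ V, Y v = ∑ w ∈ V with v ≤ w, m w) (hY0 : ∀ v ∈ V, Y v ≠ 0) :
    ∑ v ∈ V, (m v * ∏ w ∈ V with w ≤ v, (1 - d w / Y w)
        + d v * ∏ w ∈ V with w < v, (1 - d w / Y w)) = ∑ v ∈ V, m v := by
  induction V using Finset.induction_on_min with
  | empty => simp
  | insert a s ha ih =>
    have ha_notMem : a ∉ s := fun h => lt_irrefl a (ha a h)
    have hYs : ∀ v ∈ s, Y v = ∑ w ∈ s with v ≤ w, m w := fun v hv => by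
      rw [hY v (mem_insert_of_mem hv), filter_insert, if_neg (ha v hv).not_ge]
    have hYa : Y a = m a + ∑ v ∈ s, m v := by
      rw [hY a (mem_insert_self a s), filter_true_of_mem fun w hw => ?_, sum_insert ha_notMem]
      rcases mem_insert.1 hw with rfl | hw
      exacts [le_rfl, (ha w hw).le]
    have hprod_le : ∏ w ∈ insert a s with w ≤ a, (1 - d w / Y w) = 1 - d a / Y a := by
      rw [filter_insert, if_pos le_rfl, filter_false_of_mem fun w hw => (ha w hw).not_ge]
      simp
    have hprod_lt : ∏ w ∈ insert a s with w < a, (1 - d w / Y w) = 1 := by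
      rw [filter_insert, if_neg (lt_irrefl a), filter_false_of_mem fun w hw => (ha w hw).not_gt]
      simp
    have hprod_of_mem {r : α → α → Prop} [DecidableRel r] (hr : ∀ v ∈ s, r a v) :
        ∀ v ∈ s, ∏ w ∈ insert a s with r w v, (1 - d w / Y w)
          = (1 - d a / Y a) * ∏ w ∈ s with r w v, (1 - d w / Y w) := fun v hv => by
      rw [filter_insert, if_pos (hr v hv), prod_insert (fun h => ha_notMem (mem_filter.1 h).1)]
    have htail : ∑ v ∈ s, (m v * ∏ w ∈ insert a s with w ≤ v, (1 - d w / Y w)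
        + d v * ∏ w ∈ insert a s with w < v, (1 - d w / Y w))
          = (1 - d a / Y a) * ∑ v ∈ s, m v := by
      rw [← ih hYs fun v hv => hY0 v (mem_insert_of_mem hv), mul_sum]
      refine sum_congr rfl fun v hv => ?_
      rw [hprod_of_mem (fun v hv => (ha v hv).le) v hv, hprod_of_mem ha v hv]
      ring
    have hYa_mul : (1 - d a / Y a) * Y a = Y a - d a := by
      field_simp [hY0 a (mem_insert_self a s)]
    rw [sum_insert ha_notMem, sum_insert ha_notMem, hprod_le, hprod_lt, htail]
    linear_combination hYa_mul + d a / Y a * hYa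

section KaplanMeier

variable {n : ℕ} (e : Fin n → ℝ)

theorem kmY_eq_sum_card_fiber (v : ℝ) :
    kmY e v = ∑ w ∈ univ.image e with v ≤ w, (#{i | e i = w} : ℝ) := by
  rw [kmY, natCast_card_filter, sum_comp (fun w => if v ≤ w then (1 : ℝ) else 0) e, sum_filter]
  simp

theorem kmY_ne_zero {v : ℝ} (hv : v ∈ univ.image e) : kmY e v ≠ 0 := by
  obtain ⟨i, -, rfl⟩ := mem_image.1 hv
  rw [kmY, Nat.cast_ne_zero]
  exact card_ne_zero_of_mem (mem_filter.2 ⟨mem_univ i, le_rfl⟩)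

theorem kmD_eq_sum {δ : Fin n → ℝ} (hδ : ∀ i, δ i = 0 ∨ δ i = 1) (v : ℝ) :
    kmD e δ v = ∑ i with e i = v, δ i := by
  rw [kmD, ← filter_filter, natCast_card_filter]
  refine sum_congr rfl fun i _ => ?_
  rcases hδ i with h | h <;> simp [h]

theorem sum_survival_add_mul_survival_left_eq_card {δ : Fin n → ℝ}
    (hδ : ∀ i, δ i = 0 ∨ δ i = 1) :
    ∑ i, ((1 - kmF e δ (e i)) + δ i * (1 - kmFminus e δ (e i))) = n := by
  set V := univ.image e
  have hfiber : ∀ i ∈ (univ : Finset (Fin n)), e i ∈ V := fun i _ =>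
    mem_image_of_mem e (mem_univ i)
  have hevents : ∑ i, δ i * (1 - kmFminus e δ (e i))
      = ∑ v ∈ V, kmD e δ v * (1 - kmFminus e δ v) := by
    rw [← sum_fiberwise_of_maps_to hfiber]
    refine sum_congr rfl fun v _ => ?_
    rw [kmD_eq_sum e hδ, sum_mul]
    exact sum_congr rfl fun i hi => by rw [(mem_filter.1 hi).2]
  have hcount : (n : ℝ) = ∑ v ∈ V, (#{i | e i = v} : ℝ) := by
    simpa using congrArg (Nat.cast (R := ℝ)) (card_eq_sum_card_image e univ)
  rw [sum_add_distrib, sum_comp (fun t => 1 - kmF e δ t) e, hevents, hcount, ← sum_add_distrib]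
  simp only [kmF, kmFminus, sub_sub_cancel, nsmul_eq_mul]
  exact sum_mul_prod_le_add_mul_prod_lt_eq_sum V _ (kmD e δ) (kmY e)
    (fun v _ => kmY_eq_sum_card_fiber e v) (fun v hv => kmY_ne_zero e hv)

end KaplanMeier

theorem wilcoxon_rank_sum_general (n : ℕ) (e : Fin n → ℝ) (δ : Fin n → ℝ)
    (hδ : ∀ i, δ i = 0 ∨ δ i = 1) :
    ∑ i, (δ i * ((kmF e δ (e i) + kmFminus e δ (e i)) / 2)
        + (1 - δ i) * (1 - (1 - kmF e δ (e i)) / 2)) = n / 2 := by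
  have hmass := sum_survival_add_mul_survival_left_eq_card e hδ
  calc ∑ i, (δ i * ((kmF e δ (e i) + kmFminus e δ (e i)) / 2)
          + (1 - δ i) * (1 - (1 - kmF e δ (e i)) / 2))
      = ∑ i, (1 - ((1 - kmF e δ (e i)) + δ i * (1 - kmFminus e δ (e i))) / 2) :=
        sum_congr rfl fun i _ => by ring
    _ = n / 2 := by
        rw [sum_sub_distrib, ← sum_div, hmass, sum_const, card_univ, Fintype.card_fin,
          nsmul_one]
        ring

/-- Theorem 2 (rank-sum identity for the Wilcoxon score): with `δ_i = 1` whenever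
`e_i` is the largest observation, the Wilcoxon imputed mid-ranks
`δ_i·(F̂(e_i)+F̂(e_i⁻))/2 + (1−δ_i)·(1 − (1 − F̂(e_i))/2)` sum to `n/2`. -/
theorem wilcoxon_rank_sum (n : ℕ) (hn : 1 ≤ n) (e : Fin n → ℝ) (δ : Fin n → ℝ)
    (hδ : ∀ i, δ i = 0 ∨ δ i = 1)
    (hmax : ∀ i, (∀ j, e j ≤ e i) → δ i = 1) :
    ∑ i, (δ i * ((kmF e δ (e i) + kmFminus e δ (e i)) / 2)
        + (1 - δ i) * (1 - (1 - kmF e δ (e i)) / 2)) = n / 2 :=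
  wilcoxon_rank_sum_general n e δ hδ
end

section
/- In the self-consistent (Kaplan–Meier) estimator setup with data e_1, …, e_n and indicators δ_1, …, δ_n ∈ {0,1} satisfying δ_i = 1 whenever e_i = max_j e_j, and for any continuous a : [0,1] → ℝ with A(u) = ∫_0^u a(s) ds, the general-score imputed ranks sum to n·(A(1) − A(0)); that is, ∑_{i=1}^n [ δ_i·(A(F̂(e_i)) − A(F̂(e_i⁻)))/(F̂(e_i) − F̂(e_i⁻)) + (1 − δ_i)·(A(1) − A(F̂(e_i)))/(1 − F̂(e_i)) ] = n·(A(1) − A(0)). -/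
open Finset
open scoped Classical

/-!
Sort the distinct values `w₀ < ⋯ < w_{m-1}` and put `S_k = ∏_{j<k} (1 - d(w_j)/Y(w_j))`, so that
`F̂(w_k⁻) = 1 - S_k` and `F̂(w_k) = 1 - S_{k+1}`. With `φ(s) = (A(1) - A(1 - s))/s`, the
observations at `w_k` contribute `Y(w_k) φ(S_k) - Y(w_{k+1}) φ(S_{k+1})` (reading `Y(w_m) = 0`),
because `S_{k+1} = S_k (1 - d(w_k)/Y(w_k))` and `w_k` carries `d(w_k)` events and
`Y(w_k) - Y(w_{k+1}) - d(w_k)` censored observations. The sum therefore telescopes to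
`Y(w₀) φ(1) = n (A(1) - A(0))`.
-/

namespace Finset

variable {α : Type*} [LinearOrder α] [Inhabited α] (s : Finset α)

/-- The `k`-th smallest element of `s` (counting from `0`), and `default` once `s.card ≤ k`. -/
noncomputable def sortedNth (k : ℕ) : α :=
  if h : k < s.card then s.orderEmbOfFin rfl ⟨k, h⟩ else default

lemma sortedNth_strictMonoOn : StrictMonoOn s.sortedNth (Set.Iio s.card) := by
  intro j hj k hk hjk
  simp only [Set.mem_Iio] at hj hk
  simpa [sortedNth, hj, hk] using hjk

lemma image_sortedNth_range : (range s.card).image s.sortedNth = s := by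
  ext x
  constructor
  · intro hx
    obtain ⟨k, hk, rfl⟩ := mem_image.mp hx
    have hk : k < s.card := mem_range.mp hk
    simp [sortedNth, hk]
  · intro hx
    have : x ∈ Set.range (s.orderEmbOfFin rfl) := by simpa using hx
    obtain ⟨⟨k, hk⟩, rfl⟩ := this
    exact mem_image.mpr ⟨k, mem_range.mpr hk, by simp [sortedNth, hk]⟩

variable {s}

lemma sortedNth_mem {k : ℕ} (hk : k < s.card) : s.sortedNth k ∈ s := by
  simp [sortedNth, hk]

lemma exists_sortedNth_eq {x : α} (hx : x ∈ s) : ∃ j < s.card, s.sortedNth j = x := by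
  rw [← s.image_sortedNth_range] at hx
  simpa using hx

lemma filter_lt_sortedNth {k : ℕ} (hk : k < s.card) :
    s.filter (· < s.sortedNth k) = (range k).image s.sortedNth := by
  ext x
  simp only [mem_filter, mem_image, mem_range]
  constructor
  · rintro ⟨hx, hjk⟩
    obtain ⟨j, hj, rfl⟩ := exists_sortedNth_eq hx
    exact ⟨j, (s.sortedNth_strictMonoOn.lt_iff_lt hj hk).mp hjk, rfl⟩
  · rintro ⟨j, hjk, rfl⟩
    exact ⟨sortedNth_mem (hjk.trans hk), s.sortedNth_strictMonoOn (hjk.trans hk) hk hjk⟩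

lemma filter_le_sortedNth {k : ℕ} (hk : k < s.card) :
    s.filter (· ≤ s.sortedNth k) = (range (k + 1)).image s.sortedNth := by
  ext x
  simp only [mem_filter, mem_image, mem_range, Nat.lt_succ_iff]
  constructor
  · rintro ⟨hx, hjk⟩
    obtain ⟨j, hj, rfl⟩ := exists_sortedNth_eq hx
    exact ⟨j, (s.sortedNth_strictMonoOn.le_iff_le hj hk).mp hjk, rfl⟩
  · rintro ⟨j, hjk, rfl⟩
    have hj : j < s.card := hjk.trans_lt hk
    exact ⟨sortedNth_mem hj, (s.sortedNth_strictMonoOn.le_iff_le hj hk).mpr hjk⟩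

end Finset

/-- The imputed score of an observation with indicator `δi`, `F = F̂(eᵢ)` and `F' = F̂(eᵢ⁻)`. -/
noncomputable def imputedScore (A : ℝ → ℝ) (δi F F' : ℝ) : ℝ :=
  δi * ((A F - A F') / (F - F')) + (1 - δi) * ((A 1 - A F) / (1 - F))

/-- The mean of `A'` over `[1 - s, 1]`, with junk value `0` at `s = 0`. -/
noncomputable def tailMean (A : ℝ → ℝ) (s : ℝ) : ℝ :=
  (A 1 - A (1 - s)) / s

lemma eventSum_add_censoredSum_eq (A : ℝ → ℝ) {d y y' s s' : ℝ} (hy : y ≠ 0)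
    (hs' : s' = s * (1 - d / y)) :
    d * ((A (1 - s') - A (1 - s)) / ((1 - s') - (1 - s)))
        + (y - y' - d) * ((A 1 - A (1 - s')) / (1 - (1 - s')))
      = y * tailMean A s - y' * tailMean A s' := by
  simp only [sub_sub_sub_cancel_left, sub_sub_cancel, tailMean]
  rcases eq_or_ne s 0 with rfl | hs
  · simp [hs']
  rcases eq_or_ne d 0 with rfl | hd
  · simp only [hs', zero_div, sub_zero, mul_one]
    ring
  rcases eq_or_ne d y with rfl | hdy
  · simp [hs', div_self hy]
  have hs'0 : s' ≠ 0 := by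
    rw [hs']
    exact mul_ne_zero hs (sub_ne_zero.mpr (by rwa [ne_comm, Ne, div_eq_one_iff_eq hy]))
  have hss' : s - s' = s * d / y := by
    rw [hs']
    field_simp
    ring
  generalize A 1 = a₁, A (1 - s) = a, A (1 - s') = a'
  rw [hss']
  field_simp
  rw [hs']
  field_simp
  ring

noncomputable def kmValue {n : ℕ} (e : Fin n → ℝ) (k : ℕ) : ℝ :=
  (univ.image e).sortedNth k

noncomputable def kmSurv {n : ℕ} (e δ : Fin n → ℝ) (k : ℕ) : ℝ :=
  ∏ j ∈ range k, (1 - kmD e δ (kmValue e j) / kmY e (kmValue e j))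

noncomputable def kmRemaining {n : ℕ} (e : Fin n → ℝ) (k : ℕ) : ℝ :=
  #{i | e i ∉ (range k).image (kmValue e)}

section KaplanMeier

variable {n : ℕ} (e δ : Fin n → ℝ) {k : ℕ}

lemma injOn_kmValue : Set.InjOn (kmValue e) (Set.Iio (univ.image e).card) :=
  (univ.image e).sortedNth_strictMonoOn.injOn

lemma filter_lt_kmValue (hk : k < (univ.image e).card) :
    (univ.image e).filter (· < kmValue e k) = (range k).image (kmValue e) :=
  filter_lt_sortedNth hk

lemma filter_le_kmValue (hk : k < (univ.image e).card) :
    (univ.image e).filter (· ≤ kmValue e k) = (range (k + 1)).image (kmValue e) :=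
  filter_le_sortedNth hk

lemma image_kmValue_range : (range (univ.image e).card).image (kmValue e) = univ.image e :=
  image_sortedNth_range _

lemma kmF_kmValue (hk : k < (univ.image e).card) :
    kmF e δ (kmValue e k) = 1 - kmSurv e δ (k + 1) := by
  rw [kmF, filter_le_kmValue e hk, prod_image, kmSurv]
  exact (injOn_kmValue e).mono fun j hj => by simp only [coe_range, Set.mem_Iio] at hj ⊢; omega

lemma kmFminus_kmValue (hk : k < (univ.image e).card) :
    kmFminus e δ (kmValue e k) = 1 - kmSurv e δ k := by
  rw [kmFminus, filter_lt_kmValue e hk, prod_image, kmSurv]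
  exact (injOn_kmValue e).mono fun j hj => by simp only [coe_range, Set.mem_Iio] at hj ⊢; omega

lemma kmSurv_succ :
    kmSurv e δ (k + 1) = kmSurv e δ k * (1 - kmD e δ (kmValue e k) / kmY e (kmValue e k)) :=
  prod_range_succ _ _

lemma kmRemaining_zero : kmRemaining e 0 = n := by
  simp [kmRemaining]

lemma kmRemaining_card : kmRemaining e (univ.image e).card = 0 := by
  simp [kmRemaining, image_kmValue_range]

lemma mem_image_kmValue_range_iff (hk : k < (univ.image e).card) (i : Fin n) :
    e i ∈ (range k).image (kmValue e) ↔ e i < kmValue e k := by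
  rw [← filter_lt_kmValue e hk, mem_filter]
  simp

lemma kmRemaining_eq_kmY (hk : k < (univ.image e).card) :
    kmRemaining e k = kmY e (kmValue e k) := by
  simp only [kmRemaining, kmY, mem_image_kmValue_range_iff e hk, not_lt]

lemma kmRemaining_eq_add (hk : k < (univ.image e).card) :
    kmRemaining e k = #{i | e i = kmValue e k} + kmRemaining e (k + 1) := by
  rw [kmRemaining, kmRemaining, ← Nat.cast_add, ← card_union_of_disjoint, ← filter_or]
  · congr 3 with i
    rw [range_add_one, image_insert, mem_insert]
    constructor
    · tauto
    · rintro (h | h)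
      · rw [h, ← filter_lt_kmValue e hk]
        simp
      · tauto
  · rw [disjoint_filter]
    rintro i - h
    simp [h, range_add_one]

lemma sum_fiber_eq_kmD (hδ : ∀ i, δ i = 0 ∨ δ i = 1) (v : ℝ) :
    ∑ i with e i = v, δ i = kmD e δ v := by
  have hδ' : ∀ i, δ i = if δ i = 1 then 1 else 0 := fun i => by
    rcases hδ i with h | h <;> simp [h]
  rw [sum_congr rfl fun i _ => hδ' i, sum_boole, filter_filter, kmD]

lemma sum_imputedScore_fiber (hδ : ∀ i, δ i = 0 ∨ δ i = 1) (A : ℝ → ℝ)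
    (hk : k < (univ.image e).card) :
    ∑ i with e i = kmValue e k, imputedScore A (δ i) (kmF e δ (e i)) (kmFminus e δ (e i))
      = kmRemaining e k * tailMean A (kmSurv e δ k)
        - kmRemaining e (k + 1) * tailMean A (kmSurv e δ (k + 1)) := by
  have hY : kmY e (kmValue e k) ≠ 0 := by
    rw [← kmRemaining_eq_kmY e hk, kmRemaining_eq_add e hk]
    obtain ⟨i, -, hi⟩ := mem_image.mp (sortedNth_mem hk)
    have hfiber : (0 : ℝ) < #{i | e i = kmValue e k} :=
      Nat.cast_pos.mpr (card_pos.mpr ⟨i, mem_filter.mpr ⟨mem_univ i, hi⟩⟩)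
    have hrest : (0 : ℝ) ≤ kmRemaining e (k + 1) := Nat.cast_nonneg _
    linarith
  calc _ = ∑ i with e i = kmValue e k,
        imputedScore A (δ i) (1 - kmSurv e δ (k + 1)) (1 - kmSurv e δ k) :=
        sum_congr rfl fun i hi => by
          rw [(mem_filter.mp hi).2, kmF_kmValue e δ hk, kmFminus_kmValue e δ hk]
    _ = kmD e δ (kmValue e k) * ((A (1 - kmSurv e δ (k + 1)) - A (1 - kmSurv e δ k))
            / ((1 - kmSurv e δ (k + 1)) - (1 - kmSurv e δ k)))
          + (kmRemaining e k - kmRemaining e (k + 1) - kmD e δ (kmValue e k))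
            * ((A 1 - A (1 - kmSurv e δ (k + 1))) / (1 - (1 - kmSurv e δ (k + 1)))) := by
        simp only [imputedScore, sum_add_distrib, ← sum_mul, sum_sub_distrib,
          sum_fiber_eq_kmD e δ hδ, sum_const, nsmul_eq_mul, mul_one, kmRemaining_eq_add e hk]
        ring
    _ = _ := by
        rw [kmRemaining_eq_kmY e hk]
        exact eventSum_add_censoredSum_eq A hY (kmSurv_succ e δ)

end KaplanMeier

theorem generalScore_rank_sum_general (n : ℕ) (e : Fin n → ℝ) (δ : Fin n → ℝ)
    (hδ : ∀ i, δ i = 0 ∨ δ i = 1)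
    (A : ℝ → ℝ) :
    ∑ i, (δ i * ((A (kmF e δ (e i)) - A (kmFminus e δ (e i)))
            / (kmF e δ (e i) - kmFminus e δ (e i)))
        + (1 - δ i) * ((A 1 - A (kmF e δ (e i))) / (1 - kmF e δ (e i))))
      = n * (A 1 - A 0) := by
  calc _ = ∑ v ∈ univ.image e, ∑ i with e i = v,
        imputedScore A (δ i) (kmF e δ (e i)) (kmFminus e δ (e i)) :=
        (sum_fiberwise_of_maps_to (fun i _ => mem_image_of_mem e (mem_univ i)) _).symm
    _ = ∑ k ∈ range (univ.image e).card, ∑ i with e i = kmValue e k,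
        imputedScore A (δ i) (kmF e δ (e i)) (kmFminus e δ (e i)) := by
        conv_lhs => rw [← image_kmValue_range e]
        exact sum_image (by rw [coe_range]; exact injOn_kmValue e)
    _ = _ := by
        rw [sum_congr rfl fun k hk => sum_imputedScore_fiber e δ hδ A (mem_range.mp hk),
          sum_range_sub', kmRemaining_zero, kmRemaining_card]
        simp [tailMean, kmSurv]

/-- Rank-sum identity of Theorem 5: with `δ_i = 1` whenever `e_i` is the largest
observation, and for a continuous score `a : [0,1] → ℝ` with `A u = ∫_0^u a`, the
general-score imputed ranks
`δ_i·(A(F̂(e_i)) − A(F̂(e_i⁻)))/(F̂(e_i) − F̂(e_i⁻)) + (1−δ_i)·(A(1) − A(F̂(e_i)))/(1 − F̂(e_i))`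
sum to `n·(A(1) − A(0))`. -/
theorem generalScore_rank_sum (n : ℕ) (hn : 1 ≤ n) (e : Fin n → ℝ) (δ : Fin n → ℝ)
    (hδ : ∀ i, δ i = 0 ∨ δ i = 1)
    (hmax : ∀ i, (∀ j, e j ≤ e i) → δ i = 1)
    (a : ℝ → ℝ) (ha : ContinuousOn a (Set.Icc 0 1))
    (A : ℝ → ℝ) (hA : ∀ u, A u = ∫ s in (0 : ℝ)..u, a s) :
    ∑ i, (δ i * ((A (kmF e δ (e i)) - A (kmFminus e δ (e i)))
            / (kmF e δ (e i) - kmFminus e δ (e i)))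
        + (1 - δ i) * ((A 1 - A (kmF e δ (e i))) / (1 - kmF e δ (e i))))
      = n * (A 1 - A 0) :=
  generalScore_rank_sum_general n e δ hδ A
end

section
/- Let F be a continuous CDF with survival function S = 1 − F, and on a probability space let W be a bounded measurable real-valued random variable and C a real-valued random variable (not necessarily independent of W). Then (1/4)·∫_ℝ E[ W·1{C ≥ u} ]·S(u)² dμ_F(u) = (1/12)·( E[W] − E[ W·S(C)³ ] ). -/
/-!
For continuous `F` the probability integral transform carries `μ_F` to Lebesgue measure on
`(0, 1]`, so `∫_{u ≤ c} S(u)² dμ_F = ∫₀^{F c} (1 - t)² dt = (1 - S(c)³) / 3`. Exchanging the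
`u`- and `ω`-integrals by Fubini (the integrand is bounded) turns the left-hand side into
`(1/4) · E[W · (1 - S(C)³) / 3]`.
-/

open MeasureTheory Set Filter Topology

namespace StieltjesFunction

variable (F : StieltjesFunction ℝ) {a b : ℝ}

/-- `F` is constant on this set. -/
theorem measure_preimage_Iic_diff_Iic (hF : Continuous F) (hb : Tendsto F atTop (𝓝 b)) (c : ℝ) :
    F.measure (F ⁻¹' Iic (F c) \ Iic c) = 0 := by
  set B := Ici c ∩ F ⁻¹' Iic (F c)
  by_cases hB : BddAbove B
  · have hcB : c ∈ B := ⟨mem_Ici.2 le_rfl, mem_Iic.2 (le_refl (F c))⟩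
    have hsup : sSup B ∈ B := (isClosed_Ici.inter (isClosed_Iic.preimage hF)).csSup_mem ⟨c, hcB⟩ hB
    refine measure_mono_null (t := Ioc c (sSup B)) (fun u hu => ?_) ?_
    · have hcu : c < u := not_le.1 hu.2
      exact ⟨hcu, le_csSup hB ⟨hcu.le, hu.1⟩⟩
    · rw [F.measure_Ioc, ENNReal.ofReal_eq_zero, sub_nonpos]
      exact hsup.2
  · have hle : ∀ x, F x ≤ F c := fun x => by
      obtain ⟨u, hu, hxu⟩ := not_bddAbove_iff.1 hB x
      exact (F.mono hxu.le).trans hu.2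
    refine measure_mono_null (t := Ioi c) (fun u hu => mem_Ioi.2 (not_le.1 hu.2)) ?_
    rw [F.measure_Ioi hb, ENNReal.ofReal_eq_zero, sub_nonpos]
    exact le_of_tendsto' hb hle

theorem preimage_Iic_ae_eq_Iic (hF : Continuous F) (hb : Tendsto F atTop (𝓝 b)) (c : ℝ) :
    F ⁻¹' Iic (F c) =ᵐ[F.measure] Iic c := by
  refine ae_eq_set.2 ⟨F.measure_preimage_Iic_diff_Iic hF hb c, ?_⟩
  have hsub : Iic c ⊆ F ⁻¹' Iic (F c) := fun _ hu => F.mono hu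
  rw [sdiff_eq_empty.2 hsub, measure_empty]

/-- The probability integral transform. -/
theorem map_measure_self (hF : Continuous F) (ha : Tendsto F atBot (𝓝 a))
    (hb : Tendsto F atTop (𝓝 b)) : F.measure.map F = volume.restrict (Ioc a b) := by
  have := F.isFiniteMeasure ha hb
  refine Measure.ext_of_Iic _ _ fun y => ?_
  rw [Measure.map_apply hF.measurable measurableSet_Iic,
    Measure.restrict_apply measurableSet_Iic, inter_comm, Ioc_inter_Iic, Real.volume_Ioc]
  by_cases hy : y ∈ range F
  · obtain ⟨c, rfl⟩ := hy
    rw [measure_congr (F.preimage_Iic_ae_eq_Iic hF hb c), F.measure_Iic ha,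
      min_eq_right (F.mono.ge_of_tendsto hb c)]
  · obtain hlow | hhigh : (∀ u, y < F u) ∨ ∀ u, F u < y := by
      by_contra! h
      exact hy (mem_range_of_exists_le_of_exists_ge hF h.1 h.2)
    · have hya : y ≤ a := ge_of_tendsto' ha fun u => (hlow u).le
      have hempty : F ⁻¹' Iic y = ∅ := eq_empty_of_forall_notMem fun u hu => (hlow u).not_ge hu
      rw [hempty, measure_empty, eq_comm, ENNReal.ofReal_eq_zero]
      linarith [min_le_right b y]
    · have hby : b ≤ y := le_of_tendsto' hb fun u => (hhigh u).le
      have huniv : F ⁻¹' Iic y = univ := eq_univ_of_forall fun u => (hhigh u).le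
      rw [huniv, F.measure_univ ha hb, min_eq_left hby]

theorem setIntegral_Iic_comp {E : Type*} [NormedAddCommGroup E] [NormedSpace ℝ E]
    (hF : Continuous F) (ha : Tendsto F atBot (𝓝 a)) (hb : Tendsto F atTop (𝓝 b))
    {g : ℝ → E} (hg : StronglyMeasurable g) (c : ℝ) :
    ∫ u in Iic c, g (F u) ∂F.measure = ∫ t in a..F c, g t := by
  calc ∫ u in Iic c, g (F u) ∂F.measure
      = ∫ u in F ⁻¹' Iic (F c), g (F u) ∂F.measure :=
        setIntegral_congr_set (F.preimage_Iic_ae_eq_Iic hF hb c).symm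
    _ = ∫ t in Iic (F c), g t ∂F.measure.map F :=
        (setIntegral_map measurableSet_Iic hg.aestronglyMeasurable hF.aemeasurable).symm
    _ = ∫ t in a..F c, g t := by
        rw [F.map_measure_self hF ha hb, Measure.restrict_restrict measurableSet_Iic,
          Iic_inter_Ioc_of_le (F.mono.ge_of_tendsto hb c),
          intervalIntegral.integral_of_le (F.mono.le_of_tendsto ha c)]

theorem setIntegral_Iic_one_sub_sq (hF : Continuous F) (h0 : Tendsto F atBot (𝓝 0))
    (h1 : Tendsto F atTop (𝓝 1)) (c : ℝ) :
    ∫ u in Iic c, (1 - F u) ^ 2 ∂F.measure = (1 - (1 - F c) ^ 3) / 3 := by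
  rw [F.setIntegral_Iic_comp hF h0 h1 (g := fun t => (1 - t) ^ 2) (by fun_prop) c,
    intervalIntegral.integral_comp_sub_left (fun t => t ^ 2), integral_pow]
  ring

end StieltjesFunction

theorem integral_integral_ite_le_mul {Ω : Type*} [MeasurableSpace Ω] {P : Measure Ω}
    [IsFiniteMeasure P] {μ : Measure ℝ} [IsFiniteMeasure μ] {W C : Ω → ℝ} {g : ℝ → ℝ}
    (hW : Measurable W) {M : ℝ} (hWM : ∀ ω, |W ω| ≤ M) (hC : Measurable C)
    (hg : Measurable g) {K : ℝ} (hgK : ∀ u, |g u| ≤ K) :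
    ∫ u, (∫ ω, W ω * (if u ≤ C ω then (1 : ℝ) else 0) ∂P) * g u ∂μ
      = ∫ ω, W ω * ∫ u in Iic (C ω), g u ∂μ ∂P := by
  have hbound : ∀ u ω, |W ω * (if u ≤ C ω then (1 : ℝ) else 0) * g u| ≤ M * K := by
    intro u ω
    rw [abs_mul, abs_mul]
    have hite : |if u ≤ C ω then (1 : ℝ) else 0| ≤ 1 := by split_ifs <;> simp
    calc |W ω| * |if u ≤ C ω then (1 : ℝ) else 0| * |g u| ≤ |W ω| * 1 * |g u| := by gcongr
      _ ≤ M * K := by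
        rw [mul_one]
        exact mul_le_mul (hWM ω) (hgK u) (abs_nonneg _) ((abs_nonneg _).trans (hWM ω))
  have hint : Integrable
      (Function.uncurry fun u ω => W ω * (if u ≤ C ω then (1 : ℝ) else 0) * g u) (μ.prod P) := by
    refine Integrable.of_bound ?_ (M * K) (ae_of_all _ fun p => hbound p.1 p.2)
    refine (Measurable.mul (Measurable.mul (hW.comp measurable_snd) ?_)
      (hg.comp measurable_fst)).aestronglyMeasurable
    exact Measurable.ite (measurableSet_le measurable_fst (hC.comp measurable_snd))
      measurable_const measurable_const
  calc ∫ u, (∫ ω, W ω * (if u ≤ C ω then (1 : ℝ) else 0) ∂P) * g u ∂μ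
      = ∫ u, ∫ ω, W ω * (if u ≤ C ω then (1 : ℝ) else 0) * g u ∂P ∂μ := by
        simp only [integral_mul_const]
    _ = ∫ ω, ∫ u, W ω * (if u ≤ C ω then (1 : ℝ) else 0) * g u ∂μ ∂P :=
        integral_integral_swap hint
    _ = ∫ ω, W ω * ∫ u in Iic (C ω), g u ∂μ ∂P := by
        refine integral_congr_ae (ae_of_all _ fun ω => ?_)
        simp only [← integral_indicator measurableSet_Iic, ← integral_const_mul, indicator_apply,
          mem_Iic, mul_ite, mul_one, mul_zero, ite_mul, zero_mul]

/-- Scalar form of the simplification of `Σ₁` in Theorem 4: for a continuous CDF `F`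
with survival function `S = 1 − F`, a bounded measurable `W` and a random variable `C`
on a probability space,
`(1/4)·∫ E[W·1{C ≥ u}]·S(u)² dμ_F(u) = (1/12)·(E[W] − E[W·S(C)³])`. -/
theorem sigma1_simplification (F : StieltjesFunction ℝ) (hFc : Continuous F)
    (h0 : Filter.Tendsto F Filter.atBot (nhds 0))
    (h1 : Filter.Tendsto F Filter.atTop (nhds 1))
    {Ω : Type*} [MeasurableSpace Ω] (P : Measure Ω) [IsProbabilityMeasure P]
    (W : Ω → ℝ) (hW : Measurable W) (M : ℝ) (hWb : ∀ ω, |W ω| ≤ M)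
    (C : Ω → ℝ) (hC : Measurable C) :
    (1 / 4) * ∫ u, (∫ ω, W ω * (if u ≤ C ω then (1 : ℝ) else 0) ∂P) * (1 - F u) ^ 2
        ∂F.measure
      = (1 / 12) * ((∫ ω, W ω ∂P) - ∫ ω, W ω * (1 - F (C ω)) ^ 3 ∂P) := by
  have := F.isProbabilityMeasure h0 h1
  have hS : ∀ u, |1 - F u| ≤ 1 := fun u =>
    abs_le.2 ⟨by linarith [F.mono.ge_of_tendsto h1 u], by linarith [F.mono.le_of_tendsto h0 u]⟩
  have hW_int : Integrable W P :=
    Integrable.of_bound hW.aestronglyMeasurable M (ae_of_all _ hWb)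
  have hWS_int : Integrable (fun ω => W ω * (1 - F (C ω)) ^ 3) P :=
    hW_int.mul_bdd (by fun_prop) (ae_of_all _ fun ω => by
      rw [Real.norm_eq_abs, abs_pow]; exact pow_le_one₀ (abs_nonneg _) (hS (C ω)))
  rw [integral_integral_ite_le_mul hW hWb hC (by fun_prop) (K := 1)
      (fun u => by rw [abs_pow]; exact pow_le_one₀ (abs_nonneg _) (hS u))]
  simp only [F.setIntegral_Iic_one_sub_sq hFc h0 h1, mul_div_assoc', integral_div, mul_sub,
    mul_one, integral_sub hW_int hWS_int]
  ring
end

section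
/- Let H : ℝ → ℝ be nondecreasing and right-continuous with Lebesgue–Stieltjes measure μ_H, let a : ℝ → ℝ be continuous with A(u) = ∫_0^u a(s) ds, and define γ : ℝ → ℝ by γ(s) = (A(H(s)) − A(H(s⁻)))/(H(s) − H(s⁻)) if H(s) ≠ H(s⁻) and γ(s) = a(H(s)) otherwise. Then for all real t ≤ T, ∫_{(t, T]} γ(s) dμ_H(s) = A(H(T)) − A(H(t)). -/
/-!
Let `K u = min {s ∈ [t, T] : u ≤ H s}` be the generalized inverse of `H`. It pushes Lebesgue
measure on `(H t, H T]` forward to `μ_H` on `(t, T]`, so the left side equals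
`∫_{(H t, H T]} γ (K u) du`, and it remains to compare `γ ∘ K` with `a`. For every `u` one has
`H (K u)⁻ ≤ u ≤ H (K u)`. So off the jump intervals `(H s⁻, H s]` and the countably many left
limits, `u = H (K u)` and `γ (K u) = a u`; on a jump interval `K` is constant equal to `s`, and
`γ s` is the mean value of `a` over that interval.
-/

open MeasureTheory Set Function Filter

theorem MeasureTheory.setIntegral_eq_of_ae_eq_off_iUnion {α E ι : Type*} [MeasurableSpace α]
    [NormedAddCommGroup E] [NormedSpace ℝ E] [Countable ι] {μ : Measure α} {f g : α → E}
    {s : Set α} {Z : ι → Set α} (hZm : ∀ i, MeasurableSet (Z i))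
    (hZd : Pairwise (Disjoint on Z)) (hZs : ∀ i, Z i ⊆ s)
    (hf : IntegrableOn f s μ) (hg : IntegrableOn g s μ)
    (hoff : f =ᵐ[μ.restrict (s \ ⋃ i, Z i)] g)
    (hon : ∀ i, ∫ x in Z i, f x ∂μ = ∫ x in Z i, g x ∂μ) :
    ∫ x in s, f x ∂μ = ∫ x in s, g x ∂μ := by
  have hU : (⋃ i, Z i) ⊆ s := iUnion_subset hZs
  have hsplit : ∀ h : α → E, IntegrableOn h s μ →
      ∫ x in s, h x ∂μ = ∫ x in s \ ⋃ i, Z i, h x ∂μ + ∑' i, ∫ x in Z i, h x ∂μ := by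
    intro h hh
    rw [← integral_iUnion hZm hZd (hh.mono_set hU), ← setIntegral_union disjoint_sdiff_left
      (MeasurableSet.iUnion hZm) (hh.mono_set sdiff_subset) (hh.mono_set hU),
      sdiff_union_of_subset hU]
  rw [hsplit f hf, hsplit g hg, integral_congr_ae hoff, tsum_congr hon]

theorem Monotone.pairwise_disjoint_Ioc_leftLim {α β : Type*} [LinearOrder α]
    [ConditionallyCompleteLinearOrder β] [TopologicalSpace β] [OrderTopology β] {f : α → β}
    (hf : Monotone f) :
    Pairwise (Disjoint on fun x => Ioc (leftLim f x) (f x)) := by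
  intro x y hxy
  rcases hxy.lt_or_gt with h | h
  · exact (Iic_disjoint_Ioi (hf.le_leftLim h)).mono Ioc_subset_Iic_self Ioc_subset_Ioi_self
  · exact ((Iic_disjoint_Ioi (hf.le_leftLim h)).mono Ioc_subset_Iic_self
      Ioc_subset_Ioi_self).symm

namespace StieltjesFunction

variable (f : StieltjesFunction ℝ)

theorem isClosed_setOf_le (u : ℝ) : IsClosed {x | u ≤ f x} := by
  refine isOpen_compl_iff.1 (isOpen_iff_mem_nhds.2 fun x hx => ?_)
  have hx : f x < u := not_le.1 hx
  obtain ⟨y, hxy, hIco⟩ := mem_nhdsGE_iff_exists_Ico_subset.1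
    ((f.right_continuous x).eventually_lt_const hx)
  refine mem_of_superset (Iio_mem_nhds hxy) fun z hz => ?_
  show ¬u ≤ f z
  refine not_le.2 ?_
  rcases le_or_gt z x with h | h
  · exact (f.mono h).trans_lt hx
  · exact hIco ⟨h.le, hz⟩

/-- Generalized inverse of `f` on `[t, T]`: for `u ∈ (f t, f T]` the least `x ≥ t` with
`u ≤ f x`. Adding `T` to the set makes it nonempty for every `u`, so the map is monotone on
all of `ℝ`. -/
noncomputable def genInv (t T u : ℝ) : ℝ :=
  sInf (insert T ({x | u ≤ f x} ∩ Ici t))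

variable {f} {t T u : ℝ}

theorem bddBelow_genInv_set (htT : t ≤ T) : BddBelow (insert T ({x | u ≤ f x} ∩ Ici t)) :=
  ⟨t, forall_mem_insert.2 ⟨htT, fun _ hx => hx.2⟩⟩

theorem genInv_mem (htT : t ≤ T) : f.genInv t T u ∈ insert T ({x | u ≤ f x} ∩ Ici t) :=
  (isClosed_singleton.union ((f.isClosed_setOf_le u).inter isClosed_Ici)).csInf_mem
    (insert_nonempty _ _) (bddBelow_genInv_set htT)

theorem genInv_mem_Icc (htT : t ≤ T) : f.genInv t T u ∈ Icc t T := by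
  refine ⟨le_csInf (insert_nonempty _ _) fun x hx => ?_,
    csInf_le (bddBelow_genInv_set htT) (mem_insert _ _)⟩
  rcases hx with rfl | hx
  exacts [htT, hx.2]

theorem le_apply_genInv (htT : t ≤ T) (huT : u ≤ f T) : u ≤ f (f.genInv t T u) := by
  rcases genInv_mem (u := u) htT with h | h
  · rwa [h]
  · exact h.1

theorem genInv_le (htT : t ≤ T) {x : ℝ} (htx : t ≤ x) (hux : u ≤ f x) : f.genInv t T u ≤ x :=
  csInf_le (bddBelow_genInv_set htT) (mem_insert_of_mem _ ⟨hux, htx⟩)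

theorem apply_lt_of_lt_genInv (htT : t ≤ T) {x : ℝ} (htx : t ≤ x) (hx : x < f.genInv t T u) :
    f x < u :=
  not_le.1 fun hux => hx.not_ge (genInv_le htT htx hux)

theorem lt_genInv (htT : t ≤ T) (hu : u ∈ Ioc (f t) (f T)) : t < f.genInv t T u :=
  (genInv_mem_Icc htT).1.lt_of_ne fun h =>
    ((le_apply_genInv htT hu.2).trans_eq (congrArg f h).symm).not_gt hu.1

theorem monotone_genInv (htT : t ≤ T) : Monotone (f.genInv t T) := fun _ _ h =>
  csInf_le_csInf (bddBelow_genInv_set htT) (insert_nonempty _ _)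
    (insert_subset_insert fun _ hx => ⟨h.trans hx.1, hx.2⟩)

theorem genInv_le_iff (htT : t ≤ T) (hu : u ∈ Ioc (f t) (f T)) (b : ℝ) :
    f.genInv t T u ≤ b ↔ u ≤ f (min b T) := by
  refine ⟨fun h => (le_apply_genInv htT hu.2).trans (f.mono (le_min h (genInv_mem_Icc htT).2)),
    fun h => ?_⟩
  have htb : t ≤ min b T := le_of_not_gt fun hb => (h.trans (f.mono hb.le)).not_gt hu.1
  exact (genInv_le htT htb h).trans (min_le_left _ _)

theorem map_genInv (htT : t ≤ T) :
    (volume.restrict (Ioc (f t) (f T))).map (f.genInv t T) = f.measure.restrict (Ioc t T) := by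
  have hK := (monotone_genInv (f := f) htT).measurable
  refine Measure.ext_of_Iic _ _ fun b => ?_
  have hpre : f.genInv t T ⁻¹' Iic b ∩ Ioc (f t) (f T) = Ioc (f t) (f (min b T)) := by
    ext u
    simp only [mem_inter_iff, mem_preimage, mem_Iic, mem_Ioc]
    constructor
    · rintro ⟨h, hu⟩
      exact ⟨hu.1, (genInv_le_iff htT hu b).1 h⟩
    · rintro ⟨h1, h2⟩
      have hu : u ∈ Ioc (f t) (f T) := ⟨h1, h2.trans (f.mono (min_le_right b T))⟩
      exact ⟨(genInv_le_iff htT hu b).2 h2, hu⟩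
  rw [Measure.map_apply hK measurableSet_Iic, Measure.restrict_apply (hK measurableSet_Iic), hpre,
    Measure.restrict_apply measurableSet_Iic, inter_comm, Ioc_inter_Iic, Real.volume_Ioc,
    f.measure_Ioc, min_comm]

theorem genInv_eq_of_mem_Ioc_leftLim (htT : t ≤ T) {s : ℝ} (hs : s ∈ Ioc t T)
    (hu : u ∈ Ioc (leftLim f s) (f s)) : f.genInv t T u = s := by
  refine le_antisymm (genInv_le htT hs.1.le hu.2) (le_of_not_gt fun h => ?_)
  have huT : u ≤ f T := hu.2.trans (f.mono hs.2)
  exact ((le_apply_genInv htT huT).trans (f.mono.le_leftLim h)).not_gt hu.1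

theorem leftLim_genInv_le (htT : t ≤ T) (hu : u ∈ Ioc (f t) (f T)) :
    leftLim f (f.genInv t T u) ≤ u := by
  refine le_of_tendsto (f.mono.tendsto_leftLim _) ?_
  filter_upwards [Ioo_mem_nhdsLT (lt_genInv htT hu)] with x hx
  exact (apply_lt_of_lt_genInv htT hx.1.le hx.2).le

variable (f) (a A : ℝ → ℝ)

noncomputable def chainDensity (s : ℝ) : ℝ :=
  if f s ≠ leftLim f s then (A (f s) - A (leftLim f s)) / (f s - leftLim f s) else a (f s)

theorem sub_leftLim_mul_chainDensity (s : ℝ) :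
    (f s - leftLim f s) * f.chainDensity a A s = A (f s) - A (leftLim f s) := by
  by_cases h : f s = leftLim f s
  · simp [h]
  · rw [chainDensity, if_pos h, mul_div_cancel₀ _ (sub_ne_zero.2 h)]

variable {a A}

theorem measurable_chainDensity (ha : Measurable a) (hA : Measurable A) :
    Measurable (f.chainDensity a A) := by
  have hl : Measurable (leftLim f) := f.mono.leftLim.measurable
  have hf : Measurable f := f.mono.measurable
  exact Measurable.ite (measurableSet_eq_fun hf hl).compl
    (((hA.comp hf).sub (hA.comp hl)).div (hf.sub hl)) (ha.comp hf)

theorem abs_chainDensity_le (hA : ∀ x y, ∫ u in x..y, a u = A y - A x) {s M : ℝ}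
    (hM : ∀ x ∈ Icc (leftLim f s) (f s), |a x| ≤ M) : |f.chainDensity a A s| ≤ M := by
  have hle : leftLim f s ≤ f s := f.mono.leftLim_le le_rfl
  by_cases h : f s = leftLim f s
  · rw [chainDensity, if_neg (not_not.2 h)]
    exact hM _ ⟨hle, le_rfl⟩
  · have hpos : 0 < f s - leftLim f s := sub_pos.2 (hle.lt_of_ne (Ne.symm h))
    have hint := intervalIntegral.norm_integral_le_of_norm_le_const (a := leftLim f s)
      (b := f s) (f := a) (C := M) fun x hx => hM x (Ioc_subset_Icc_self (uIoc_of_le hle ▸ hx))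
    rw [chainDensity, if_pos h, abs_div, abs_of_pos hpos, div_le_iff₀ hpos]
    rwa [hA, Real.norm_eq_abs, abs_of_pos hpos] at hint

theorem integrableOn_chainDensity_genInv (ha : Continuous a) (hAm : Measurable A)
    (hA : ∀ x y, ∫ u in x..y, a u = A y - A x) (htT : t ≤ T) :
    IntegrableOn (fun u => f.chainDensity a A (f.genInv t T u)) (Ioc (f t) (f T)) := by
  obtain ⟨M, hM⟩ := (isCompact_Icc (a := f t) (b := f T)).exists_bound_of_continuousOn
    ha.continuousOn
  refine Measure.integrableOn_of_bounded (M := M) measure_Ioc_lt_top.ne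
    ((f.measurable_chainDensity ha.measurable hAm).comp
      (monotone_genInv htT).measurable).aestronglyMeasurable ?_
  refine (ae_restrict_iff' measurableSet_Ioc).2 (ae_of_all _ fun u hu => ?_)
  have hK := genInv_mem_Icc (f := f) (u := u) htT
  refine f.abs_chainDensity_le hA fun x hx => hM x ⟨?_, hx.2.trans (f.mono hK.2)⟩
  exact (f.mono.le_leftLim (lt_genInv htT hu)).trans hx.1

theorem chainDensity_genInv_ae_eq (htT : t ≤ T) :
    (fun u => f.chainDensity a A (f.genInv t T u)) =ᵐ[volume.restrict (Ioc (f t) (f T) \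
      ⋃ s : ↥({s | leftLim f s ≠ f s} ∩ Ioc t T), Ioc (leftLim f s) (f s))] a := by
  have := (f.countable_leftLim_ne.mono (inter_subset_left (t := Ioc t T))).to_subtype
  refine (ae_restrict_iff' (measurableSet_Ioc.diff (MeasurableSet.iUnion fun _ =>
    measurableSet_Ioc))).2 ?_
  filter_upwards [(f.countable_leftLim_ne.image (leftLim f)).ae_notMem volume]
    with u hlim ⟨hu, hnotJump⟩
  set s := f.genInv t T u
  have hs : s ∈ Ioc t T := ⟨lt_genInv htT hu, (genInv_mem_Icc htT).2⟩
  have hus : u ≤ f s := le_apply_genInv htT hu.2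
  have hsu : leftLim f s ≤ u := leftLim_genInv_le htT hu
  by_cases hj : leftLim f s = f s
  · rw [chainDensity, if_neg (not_not.2 hj.symm), le_antisymm hus (hj ▸ hsu)]
  · rcases hsu.eq_or_lt with heq | hlt
    · exact (hlim ⟨s, hj, heq⟩).elim
    · exact (hnotJump (mem_iUnion.2 ⟨⟨s, hj, hs⟩, hlt, hus⟩)).elim

theorem setIntegral_chainDensity_genInv_Ioc_leftLim (hA : ∀ x y, ∫ u in x..y, a u = A y - A x)
    (htT : t ≤ T) {s : ℝ} (hs : s ∈ Ioc t T) :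
    ∫ u in Ioc (leftLim f s) (f s), f.chainDensity a A (f.genInv t T u)
      = ∫ u in Ioc (leftLim f s) (f s), a u := by
  have hle : leftLim f s ≤ f s := f.mono.leftLim_le le_rfl
  rw [setIntegral_congr_fun measurableSet_Ioc fun u hu => by
      rw [genInv_eq_of_mem_Ioc_leftLim htT hs hu],
    setIntegral_const, Real.volume_real_Ioc_of_le hle, smul_eq_mul,
    sub_leftLim_mul_chainDensity, ← hA, intervalIntegral.integral_of_le hle]

theorem integral_chainDensity_genInv (ha : Continuous a) (hAm : Measurable A)
    (hA : ∀ x y, ∫ u in x..y, a u = A y - A x) (htT : t ≤ T) :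
    ∫ u in Ioc (f t) (f T), f.chainDensity a A (f.genInv t T u) = ∫ u in Ioc (f t) (f T), a u := by
  have := (f.countable_leftLim_ne.mono (inter_subset_left (t := Ioc t T))).to_subtype
  refine setIntegral_eq_of_ae_eq_off_iUnion (fun _ => measurableSet_Ioc)
    (f.mono.pairwise_disjoint_Ioc_leftLim.comp_of_injective Subtype.val_injective)
    (fun s u hu => ⟨(f.mono.le_leftLim s.2.2.1).trans_lt hu.1, hu.2.trans (f.mono s.2.2.2)⟩)
    (f.integrableOn_chainDensity_genInv ha hAm hA htT) ha.integrableOn_Ioc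
    (f.chainDensity_genInv_ae_eq htT)
    fun s => f.setIntegral_chainDensity_genInv_Ioc_leftLim hA htT s.2.2

end StieltjesFunction

/-- Generalized chain/substitution rule for Stieltjes integrals: for a nondecreasing
right-continuous `H : ℝ → ℝ` with Lebesgue–Stieltjes measure `μ_H`, a continuous
`a : ℝ → ℝ` with `A u = ∫_0^u a`, and
`γ s = (A(H s) − A(H s⁻))/(H s − H s⁻)` when `H s ≠ H s⁻`, `γ s = a (H s)` otherwise,
we have `∫_{(t,T]} γ dμ_H = A (H T) − A (H t)` for all `t ≤ T`. -/
theorem stieltjes_chain_rule (H : StieltjesFunction ℝ)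
    (a : ℝ → ℝ) (ha : Continuous a)
    (A : ℝ → ℝ) (hA : ∀ u, A u = ∫ s in (0 : ℝ)..u, a s)
    (γ : ℝ → ℝ)
    (hγ : ∀ s, γ s = if H s ≠ Function.leftLim H s
        then (A (H s) - A (Function.leftLim H s)) / (H s - Function.leftLim H s)
        else a (H s))
    (t T : ℝ) (htT : t ≤ T) :
    ∫ s in Set.Ioc t T, γ s ∂H.measure = A (H T) - A (H t) := by
  obtain rfl : γ = H.chainDensity a A := funext hγ
  have hprim : ∀ x y, ∫ u in x..y, a u = A y - A x := fun x y => by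
    rw [hA, hA, intervalIntegral.integral_interval_sub_left (ha.intervalIntegrable _ _)
      (ha.intervalIntegrable _ _)]
  have hAm : Measurable A := by
    rw [funext hA]
    exact (intervalIntegral.continuous_primitive (fun _ _ => ha.intervalIntegrable _ _)
      0).measurable
  rw [← H.map_genInv htT, integral_map (H.monotone_genInv htT).measurable.aemeasurable
      (H.measurable_chainDensity ha.measurable hAm).aestronglyMeasurable,
    H.integral_chainDensity_genInv ha hAm hprim htT, ← intervalIntegral.integral_of_le (H.mono htT),
    hprim]
end

section
/- Let H : ℝ → ℝ be a CDF with Lebesgue–Stieltjes measure μ_H, let γ : ℝ → ℝ be bounded and measurable, and let t be a real number with H(t) < 1. Then ∫_{(−∞, t]} [ γ(s) − (1 − H(s))⁻¹·∫_{(s,∞)} γ dμ_H ] · (1 − H(s⁻))⁻¹ dμ_H(s) = ∫_ℝ γ dμ_H − (1 − H(t))⁻¹·∫_{(t,∞)} γ dμ_H. -/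
/-!
Write `φ = (1 - H)⁻¹`. The weight `(1 - H s)⁻¹ (1 - H s⁻)⁻¹` is the density of `dφ` with respect
to `μ_H`: on a grid cell `(u, v]` the constant `(1 - H v)⁻¹ (1 - H u)⁻¹` integrates to exactly
`φ v - φ u`, and as the mesh shrinks these step functions converge pointwise to the weight
(right-continuity of `H` at `s`, left limit from below), so by dominated convergence the weight
integrates to `φ c - φ a` over `(a, c]`. Letting `a → -∞` gives `φ c - 1` over `(-∞, c]`, and
removing the atom at `c` gives `(1 - H c⁻)⁻¹ - 1` over `(-∞, c)`.

For the identity itself, split off the term `γ s (1 - H s⁻)⁻¹` and apply Fubini to the double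
integral over `{s ≤ t, s < r}`: the inner integral in `s` is one of the two closed forms above,
depending on whether `r ≤ t`.
-/

open MeasureTheory Set Filter Topology Function

lemma inv_one_sub_sub_inv_one_sub {K : Type*} [Field K] {x y : K} (hx : x ≠ 1) (hy : y ≠ 1) :
    (1 - y)⁻¹ - (1 - x)⁻¹ = (1 - y)⁻¹ * (1 - x)⁻¹ * (y - x) := by
  have hx' : 1 - x ≠ 0 := sub_ne_zero.2 hx.symm
  have hy' : 1 - y ≠ 0 := sub_ne_zero.2 hy.symm
  field_simp
  ring

lemma abs_inv_one_sub_le {y z : ℝ} (hyz : y ≤ z) (hz : z < 1) : |(1 - y)⁻¹| ≤ (1 - z)⁻¹ := by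
  rw [abs_of_pos (inv_pos.2 (by linarith))]
  exact inv_anti₀ (by linarith) (by linarith)

section Grid

noncomputable def gridCeil (a δ s : ℝ) : ℝ := a + ⌈(s - a) / δ⌉ * δ

variable {a δ : ℝ}

lemma le_gridCeil (hδ : 0 < δ) (s : ℝ) : s ≤ gridCeil a δ s := by
  have := (div_le_iff₀ hδ).1 (Int.le_ceil ((s - a) / δ))
  unfold gridCeil
  linarith

lemma gridCeil_lt (hδ : 0 < δ) (s : ℝ) : gridCeil a δ s < s + δ := by
  have := mul_lt_mul_of_pos_right (Int.ceil_lt_add_one ((s - a) / δ)) hδ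
  rw [add_mul, div_mul_cancel₀ _ hδ.ne'] at this
  unfold gridCeil
  linarith

lemma gridCeil_mono (hδ : 0 < δ) : Monotone (gridCeil a δ) := fun s s' h ↦ by
  unfold gridCeil
  gcongr

lemma gridCeil_eq_of_mem_Ioc (hδ : 0 < δ) {k : ℕ} {s : ℝ}
    (hs : s ∈ Ioc (a + k * δ) (a + (k + 1) * δ)) : gridCeil a δ s = a + (k + 1) * δ := by
  have hceil : ⌈(s - a) / δ⌉ = (k : ℤ) + 1 := by
    rw [Int.ceil_eq_iff, lt_div_iff₀ hδ, div_le_iff₀ hδ]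
    push_cast
    constructor <;> linarith [hs.1, hs.2]
  rw [gridCeil, hceil]
  push_cast
  ring

lemma gridCeil_add_mul (hδ : 0 < δ) (k : ℕ) : gridCeil a δ (a + k * δ) = a + k * δ := by
  simp [gridCeil, hδ.ne']

end Grid

section Fubini

variable {α : Type*} [TopologicalSpace α] [LinearOrder α] [OrderClosedTopology α]
  [MeasurableSpace α] [OpensMeasurableSpace α] {μ : Measure α} {A : Set α} {f γ : α → ℝ}

lemma integrable_indicator_mul_indicator_Ioi [SecondCountableTopology α] (hA : MeasurableSet A)
    (hf : IntegrableOn f A μ) (hγ : Integrable γ μ) :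
    Integrable (fun p : α × α ↦ A.indicator f p.1 * (Ioi p.1).indicator γ p.2) (μ.prod μ) := by
  have heq : (fun p : α × α ↦ A.indicator f p.1 * (Ioi p.1).indicator γ p.2)
      = {p | p.1 < p.2}.indicator fun p ↦ A.indicator f p.1 * γ p.2 := by
    ext p
    by_cases h : p.1 < p.2 <;> simp [h]
  rw [heq]
  exact ((hf.integrable_indicator hA).mul_prod hγ).indicator
    (measurableSet_lt measurable_fst measurable_snd)

lemma integral_indicator_mul_indicator_Ioi (s : α) :
    ∫ r, A.indicator f s * (Ioi s).indicator γ r ∂μ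
      = A.indicator (fun s ↦ f s * ∫ r in Ioi s, γ r ∂μ) s := by
  rw [integral_const_mul, integral_indicator measurableSet_Ioi, indicator_mul_left]

variable [SecondCountableTopology α] [SFinite μ]

lemma integrableOn_mul_integral_Ioi (hA : MeasurableSet A) (hf : IntegrableOn f A μ)
    (hγ : Integrable γ μ) : IntegrableOn (fun s ↦ f s * ∫ r in Ioi s, γ r ∂μ) A μ := by
  rw [← integrable_indicator_iff hA]
  simpa only [integral_indicator_mul_indicator_Ioi] using
    (integrable_indicator_mul_indicator_Ioi hA hf hγ).integral_prod_left

lemma setIntegral_mul_integral_Ioi (hA : MeasurableSet A) (hf : IntegrableOn f A μ)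
    (hγ : Integrable γ μ) :
    ∫ s in A, f s * ∫ r in Ioi s, γ r ∂μ ∂μ = ∫ r, γ r * ∫ s in A ∩ Iio r, f s ∂μ ∂μ := by
  have hinner : ∀ r s,
      A.indicator f s * (Ioi s).indicator γ r = γ r * (A ∩ Iio r).indicator f s := by
    intro r s
    by_cases hs : s ∈ A <;> by_cases h : s < r <;> simp [hs, h, mul_comm]
  calc ∫ s in A, f s * ∫ r in Ioi s, γ r ∂μ ∂μ
      = ∫ s, ∫ r, A.indicator f s * (Ioi s).indicator γ r ∂μ ∂μ := by
        simp_rw [integral_indicator_mul_indicator_Ioi, integral_indicator hA]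
    _ = ∫ r, ∫ s, A.indicator f s * (Ioi s).indicator γ r ∂μ ∂μ :=
        integral_integral_swap (integrable_indicator_mul_indicator_Ioi hA hf hγ)
    _ = ∫ r, γ r * ∫ s in A ∩ Iio r, f s ∂μ ∂μ := by
        simp_rw [hinner, integral_const_mul, integral_indicator (hA.inter measurableSet_Iio)]

end Fubini

namespace StieltjesFunction

variable (H : StieltjesFunction ℝ)

noncomputable def invSurvivalDensity (s : ℝ) : ℝ := (1 - H s)⁻¹ * (1 - leftLim H s)⁻¹

noncomputable def gridInvSurvivalDensity (a δ s : ℝ) : ℝ :=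
  (1 - H (gridCeil a δ s))⁻¹ * (1 - H (gridCeil a δ s - δ))⁻¹

variable {H}

lemma measurable_invSurvivalDensity : Measurable H.invSurvivalDensity :=
  (measurable_const.sub H.mono.measurable).inv.mul
    (measurable_const.sub H.mono.leftLim.measurable).inv

lemma abs_invSurvivalDensity_le {s c : ℝ} (hsc : s ≤ c) (hc : H c < 1) :
    |H.invSurvivalDensity s| ≤ (1 - H c)⁻¹ * (1 - H c)⁻¹ := by
  rw [invSurvivalDensity, abs_mul]
  exact mul_le_mul (abs_inv_one_sub_le (H.mono hsc) hc)
    (abs_inv_one_sub_le (H.mono.leftLim_le hsc) hc) (abs_nonneg _) (inv_nonneg.2 (by linarith))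

lemma tendsto_invSurvivalDensity {ι : Type*} {L : Filter ι} {r l : ι → ℝ} {s : ℝ}
    (hs : H s < 1) (hr : Tendsto r L (𝓝[≥] s)) (hl : Tendsto l L (𝓝[<] s)) :
    Tendsto (fun i ↦ (1 - H (r i))⁻¹ * (1 - H (l i))⁻¹) L (𝓝 (H.invSurvivalDensity s)) := by
  have hs' : leftLim H s < 1 := (H.mono.leftLim_le le_rfl).trans_lt hs
  exact ((tendsto_const_nhds.sub ((H.right_continuous s).tendsto.comp hr)).inv₀
    (sub_ne_zero.2 hs.ne')).mul
    ((tendsto_const_nhds.sub ((H.mono.tendsto_leftLim s).comp hl)).inv₀ (sub_ne_zero.2 hs'.ne'))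

section Grid

variable {a δ : ℝ} (hδ : 0 < δ)
include hδ

lemma eqOn_gridInvSurvivalDensity (k : ℕ) :
    EqOn (H.gridInvSurvivalDensity a δ)
      (fun _ ↦ (1 - H (a + (k + 1) * δ))⁻¹ * (1 - H (a + k * δ))⁻¹)
      (Ioc (a + k * δ) (a + (k + 1) * δ)) := fun s hs ↦ by
  simp only [gridInvSurvivalDensity, gridCeil_eq_of_mem_Ioc hδ hs,
    show a + (k + 1) * δ - δ = a + k * δ by ring]

lemma integrableOn_gridInvSurvivalDensity_and_integral {N : ℕ} {c : ℝ} (hN : a + N * δ = c)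
    (hc : H c < 1) :
    IntegrableOn (H.gridInvSurvivalDensity a δ) (Ioc a c) H.measure ∧
      ∫ s in Ioc a c, H.gridInvSurvivalDensity a δ s ∂H.measure = (1 - H c)⁻¹ - (1 - H a)⁻¹ := by
  subst hN
  set x : ℕ → ℝ := fun k ↦ a + k * δ
  have hx_mono : Monotone x := fun k l hkl ↦ by simp only [x]; gcongr
  have hcell : ∀ k < N,
      IntervalIntegrable (H.gridInvSurvivalDensity a δ) H.measure (x k) (x (k + 1)) ∧
      ∫ s in x k..x (k + 1), H.gridInvSurvivalDensity a δ s ∂H.measure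
        = (1 - H (x (k + 1)))⁻¹ - (1 - H (x k))⁻¹ := by
    intro k hk
    have hle : x k ≤ x (k + 1) := hx_mono k.le_succ
    have hlt : ∀ j ≤ N, H (x j) < 1 := fun j hj ↦ (H.mono (hx_mono hj)).trans_lt hc
    have heq := eqOn_gridInvSurvivalDensity (H := H) (a := a) hδ k
    simp only [x, Nat.cast_add, Nat.cast_one] at hle hlt ⊢
    rw [intervalIntegrable_iff_integrableOn_Ioc_of_le hle, intervalIntegral.integral_of_le hle,
      setIntegral_congr_fun measurableSet_Ioc heq, setIntegral_const, measureReal_def,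
      H.measure_Ioc, ENNReal.toReal_ofReal (sub_nonneg.2 (H.mono hle)), smul_eq_mul,
      inv_one_sub_sub_inv_one_sub (hlt k hk.le).ne (by exact_mod_cast (hlt (k + 1) hk).ne)]
    refine ⟨(integrableOn_const ?_).congr_fun heq.symm measurableSet_Ioc, by ring⟩
    rw [H.measure_Ioc]
    exact ENNReal.ofReal_ne_top
  have hIoc : Ioc a (a + N * δ) = Ioc (x 0) (x N) := by simp [x]
  rw [hIoc, ← intervalIntegrable_iff_integrableOn_Ioc_of_le (hx_mono (Nat.zero_le N)),
    ← intervalIntegral.integral_of_le (hx_mono (Nat.zero_le N)),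
    ← intervalIntegral.sum_integral_adjacent_intervals fun k hk ↦ (hcell k hk).1,
    Finset.sum_congr rfl fun k hk ↦ (hcell k (Finset.mem_range.1 hk)).2,
    Finset.sum_range_sub fun k ↦ (1 - H (x k))⁻¹]
  exact ⟨IntervalIntegrable.trans_iterate fun k hk ↦ (hcell k hk).1, by simp [x]⟩

lemma abs_gridInvSurvivalDensity_le {N : ℕ} {c : ℝ} (hN : a + N * δ = c) (hc : H c < 1) {s : ℝ}
    (hs : s ≤ c) : |H.gridInvSurvivalDensity a δ s| ≤ (1 - H c)⁻¹ * (1 - H c)⁻¹ := by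
  subst hN
  have hright : gridCeil a δ s ≤ a + N * δ :=
    (gridCeil_mono hδ hs).trans_eq (gridCeil_add_mul hδ N)
  rw [gridInvSurvivalDensity, abs_mul]
  exact mul_le_mul (abs_inv_one_sub_le (H.mono hright) hc)
    (abs_inv_one_sub_le (H.mono (by linarith)) hc) (abs_nonneg _) (inv_nonneg.2 (by linarith))

end Grid

lemma tendsto_gridInvSurvivalDensity {a s : ℝ} (hs : H s < 1) {δ : ℕ → ℝ} (hδ : ∀ n, 0 < δ n)
    (hδ0 : Tendsto δ atTop (𝓝 0)) :
    Tendsto (fun n ↦ H.gridInvSurvivalDensity a (δ n) s) atTop (𝓝 (H.invSurvivalDensity s)) := by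
  have hright : Tendsto (fun n ↦ gridCeil a (δ n) s) atTop (𝓝 s) :=
    tendsto_of_tendsto_of_tendsto_of_le_of_le tendsto_const_nhds
      (by simpa using tendsto_const_nhds.add hδ0) (fun n ↦ le_gridCeil (hδ n) s)
      (fun n ↦ (gridCeil_lt (hδ n) s).le)
  have hleft : Tendsto (fun n ↦ gridCeil a (δ n) s - δ n) atTop (𝓝 s) := by
    simpa using hright.sub hδ0
  refine tendsto_invSurvivalDensity hs
    (tendsto_nhdsWithin_of_tendsto_nhds_of_eventually_within _ hright
      (Eventually.of_forall fun n ↦ le_gridCeil (hδ n) s))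
    (tendsto_nhdsWithin_of_tendsto_nhds_of_eventually_within _ hleft
      (Eventually.of_forall fun n ↦ ?_))
  have := gridCeil_lt (a := a) (hδ n) s
  rw [mem_Iio]
  linarith

theorem integral_Ioc_invSurvivalDensity {a c : ℝ} (hac : a < c) (hc : H c < 1) :
    ∫ s in Ioc a c, H.invSurvivalDensity s ∂H.measure = (1 - H c)⁻¹ - (1 - H a)⁻¹ := by
  set δ : ℕ → ℝ := fun n ↦ (c - a) / (n + 1)
  have hδ : ∀ n, 0 < δ n := fun n ↦ div_pos (sub_pos.2 hac) n.cast_add_one_pos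
  have hδ0 : Tendsto δ atTop (𝓝 0) := by
    simpa [δ, div_eq_mul_inv] using tendsto_one_div_add_atTop_nhds_zero_nat.const_mul (c - a)
  have hc_grid : ∀ n, a + ((n + 1 : ℕ) : ℝ) * δ n = c := fun n ↦ by
    simp only [δ]
    field_simp
    push_cast
    ring
  have hstep := fun n ↦ integrableOn_gridInvSurvivalDensity_and_integral (hδ n) (hc_grid n) hc
  have hlim := tendsto_integral_of_dominated_convergence (μ := H.measure.restrict (Ioc a c))
    (fun _ ↦ (1 - H c)⁻¹ * (1 - H c)⁻¹) (fun n ↦ (hstep n).1.aestronglyMeasurable)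
    (integrableOn_const (by rw [H.measure_Ioc]; exact ENNReal.ofReal_ne_top))
    (fun n ↦ ae_restrict_of_forall_mem measurableSet_Ioc fun s hs ↦
      (Real.norm_eq_abs _).trans_le (abs_gridInvSurvivalDensity_le (hδ n) (hc_grid n) hc hs.2))
    (ae_restrict_of_forall_mem measurableSet_Ioc fun s hs ↦
      tendsto_gridInvSurvivalDensity ((H.mono hs.2).trans_lt hc) hδ hδ0)
  simp only [fun n ↦ (hstep n).2] at hlim
  exact tendsto_nhds_unique hlim tendsto_const_nhds

lemma integrableOn_Iic_mul_inv_one_sub_leftLim {c : ℝ} (hc : H c < 1) {γ : ℝ → ℝ}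
    (hγ : Integrable γ H.measure) :
    IntegrableOn (fun s ↦ γ s * (1 - leftLim H s)⁻¹) (Iic c) H.measure :=
  hγ.integrableOn.mul_bdd (measurable_const.sub H.mono.leftLim.measurable).inv.aestronglyMeasurable
    (ae_restrict_of_forall_mem measurableSet_Iic fun _ hs ↦
      (Real.norm_eq_abs _).trans_le (abs_inv_one_sub_le (H.mono.leftLim_le hs) hc))

variable (h0 : Tendsto H atBot (𝓝 0)) {c : ℝ} (hc : H c < 1)
include h0 hc

lemma integrableOn_Iic_invSurvivalDensity :
    IntegrableOn H.invSurvivalDensity (Iic c) H.measure :=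
  Measure.integrableOn_of_bounded (by rw [H.measure_Iic h0]; exact ENNReal.ofReal_ne_top)
    H.measurable_invSurvivalDensity.aestronglyMeasurable
    (ae_restrict_of_forall_mem measurableSet_Iic fun _ hs ↦
      (Real.norm_eq_abs _).trans_le (abs_invSurvivalDensity_le hs hc))

theorem integral_Iic_invSurvivalDensity :
    ∫ s in Iic c, H.invSurvivalDensity s ∂H.measure = (1 - H c)⁻¹ - 1 := by
  have hlim := intervalIntegral_tendsto_integral_Iic c
    (integrableOn_Iic_invSurvivalDensity h0 hc) tendsto_id
  have heq : ∀ᶠ a in atBot,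
      ∫ s in a..c, H.invSurvivalDensity s ∂H.measure = (1 - H c)⁻¹ - (1 - H a)⁻¹ := by
    filter_upwards [eventually_lt_atBot c] with a ha
    rw [intervalIntegral.integral_of_le ha.le, integral_Ioc_invSurvivalDensity ha hc]
  have hval : Tendsto (fun a ↦ (1 - H c)⁻¹ - (1 - H a)⁻¹) atBot (𝓝 ((1 - H c)⁻¹ - 1)) := by
    simpa using tendsto_const_nhds.sub
      ((tendsto_const_nhds.sub h0).inv₀ (by norm_num : (1 : ℝ) - 0 ≠ 0))
  exact tendsto_nhds_unique (hlim.congr' heq) hval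

theorem integral_Iio_invSurvivalDensity :
    ∫ s in Iio c, H.invSurvivalDensity s ∂H.measure = (1 - leftLim H c)⁻¹ - 1 := by
  have hint := integrableOn_Iic_invSurvivalDensity h0 hc
  have hatom : H.measure.real {c} = H c - leftLim H c := by
    rw [measureReal_def, H.measure_singleton,
      ENNReal.toReal_ofReal (sub_nonneg.2 (H.mono.leftLim_le le_rfl))]
  have hsplit := setIntegral_union (disjoint_singleton_right.2 self_notMem_Iio)
    (measurableSet_singleton c) (hint.mono_set Iio_subset_Iic_self)
    (hint.mono_set (singleton_subset_iff.2 (mem_Iic.2 le_rfl)))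
  rw [Iio_union_right, integral_Iic_invSurvivalDensity h0 hc, integral_singleton, hatom,
    smul_eq_mul, invSurvivalDensity] at hsplit
  linear_combination -hsplit + inv_one_sub_sub_inv_one_sub
    ((H.mono.leftLim_le le_rfl).trans_lt hc).ne hc.ne

theorem integral_mul_integral_Iic_inter_Iio_invSurvivalDensity {γ : ℝ → ℝ}
    (hγ : Integrable γ H.measure) :
    ∫ r, γ r * ∫ s in Iic c ∩ Iio r, H.invSurvivalDensity s ∂H.measure ∂H.measure
      = (∫ s in Iic c, γ s * (1 - leftLim H s)⁻¹ ∂H.measure) - (∫ s in Iic c, γ s ∂H.measure)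
        + ((1 - H c)⁻¹ - 1) * ∫ r in Ioi c, γ r ∂H.measure := by
  have hγψ := integrableOn_Iic_mul_inv_one_sub_leftLim hc hγ
  have hinner : ∀ r, γ r * ∫ s in Iic c ∩ Iio r, H.invSurvivalDensity s ∂H.measure
      = (Iic c).piecewise (fun r ↦ γ r * (1 - leftLim H r)⁻¹ - γ r)
          (fun r ↦ ((1 - H c)⁻¹ - 1) * γ r) r := by
    intro r
    by_cases hr : r ≤ c
    · rw [piecewise_eq_of_mem (Iic c) _ _ (mem_Iic.2 hr),
        inter_eq_right.2 (Iio_subset_Iic_self.trans (Iic_subset_Iic.2 hr)),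
        integral_Iio_invSurvivalDensity h0 ((H.mono hr).trans_lt hc)]
      ring
    · rw [piecewise_eq_of_notMem (Iic c) _ _ (notMem_Iic.2 (not_le.1 hr)),
        inter_eq_left.2 (Iic_subset_Iio.2 (not_le.1 hr)), integral_Iic_invSurvivalDensity h0 hc]
      ring
  simp_rw [hinner]
  rw [integral_piecewise (f := fun r ↦ γ r * (1 - leftLim H r)⁻¹ - γ r) measurableSet_Iic
      (hγψ.sub hγ.integrableOn) (hγ.const_mul _).integrableOn, compl_Iic,
    integral_sub hγψ hγ.integrableOn, integral_const_mul]

end StieltjesFunction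

/-- Identity (eq:Ritov-equiv) used in the proof of Theorem 5: for a CDF `H` with
Lebesgue–Stieltjes measure `μ_H`, a bounded measurable `γ`, and `t` with `H t < 1`,
`∫_{(−∞,t]} (γ(s) − (1 − H s)⁻¹ ∫_{(s,∞)} γ dμ_H) · (1 − H s⁻)⁻¹ dμ_H(s)
  = ∫_ℝ γ dμ_H − (1 − H t)⁻¹ ∫_{(t,∞)} γ dμ_H`. -/
theorem ritov_weight_identity (H : StieltjesFunction ℝ)
    (h0 : Filter.Tendsto H Filter.atBot (nhds 0))
    (h1 : Filter.Tendsto H Filter.atTop (nhds 1))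
    (γ : ℝ → ℝ) (hγm : Measurable γ) (M : ℝ) (hγb : ∀ s, |γ s| ≤ M)
    (t : ℝ) (ht : H t < 1) :
    ∫ s in Set.Iic t,
        (γ s - (1 - H s)⁻¹ * ∫ r in Set.Ioi s, γ r ∂H.measure)
          * (1 - Function.leftLim H s)⁻¹ ∂H.measure
      = (∫ r, γ r ∂H.measure) - (1 - H t)⁻¹ * ∫ r in Set.Ioi t, γ r ∂H.measure := by
  have := H.isProbabilityMeasure h0 h1
  have hγ : Integrable γ H.measure := .of_bound hγm.aestronglyMeasurable M
    (ae_of_all _ fun s ↦ (Real.norm_eq_abs _).trans_le (hγb s))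
  have hg := H.integrableOn_Iic_invSurvivalDensity h0 ht
  have hsplit := integral_add_compl (measurableSet_Iic (a := t)) hγ
  rw [compl_Iic] at hsplit
  calc _ = (∫ s in Iic t, γ s * (1 - leftLim H s)⁻¹ ∂H.measure)
        - ∫ s in Iic t, H.invSurvivalDensity s * ∫ r in Ioi s, γ r ∂H.measure ∂H.measure := by
        rw [← integral_sub (H.integrableOn_Iic_mul_inv_one_sub_leftLim ht hγ)
          (integrableOn_mul_integral_Ioi measurableSet_Iic hg hγ)]
        congr 1 with s
        rw [StieltjesFunction.invSurvivalDensity]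
        ring
    _ = (∫ s in Iic t, γ s * (1 - leftLim H s)⁻¹ ∂H.measure)
        - ∫ r, γ r * ∫ s in Iic t ∩ Iio r, H.invSurvivalDensity s ∂H.measure ∂H.measure := by
        rw [setIntegral_mul_integral_Ioi measurableSet_Iic hg hγ]
    _ = _ := by
        rw [H.integral_mul_integral_Iic_inter_Iio_invSurvivalDensity h0 ht hγ]
        linear_combination hsplit
end
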